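/- arXiv:1808.06666 — 4 statements merged into one kernel-verified Lean document; each statement's English description precedes it below -/
import Mathlib

section
/- (Hujter–Tuza) Every triangle-free graph G on n vertices satisfies mis(G) ≤ 2^{n/2}, with equality if and only if n is even and G is a perfect matching (a vertex-disjoint union of n/2 edges covering all vertices). -/
/-- A set of vertices is independent in `G` if it spans no edge. -/
def IsIndepSet {V : Type*} (G : SimpleGraph V) (s : Set V) : Prop :=
  ∀ ⦃x⦄, x ∈ s → ∀ ⦃y⦄, y ∈ s → ¬ G.Adj x y

/-- A maximal independent set. -/
def IsMaxIndepSet {V : Type*} (G : SimpleGraph V) (s : Set V) : Prop :=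
  IsIndepSet G s ∧ ∀ t, IsIndepSet G t → s ⊆ t → s = t

/-- `mis G` is the number of maximal independent sets of `G`. -/
noncomputable def mis {V : Type*} (G : SimpleGraph V) : ℕ :=
  Nat.card {s : Set V // IsMaxIndepSet G s}

/-- `S` induces a triangle matching: within `S`, every vertex has exactly two
neighbours, and these two neighbours are adjacent; so `G[S]` is a vertex-disjoint
union of triangles. -/
def IsInducedTriangleMatching {V : Type*} (G : SimpleGraph V) (S : Finset V) : Prop :=
  ∀ x ∈ S, ∃ y ∈ S, ∃ z ∈ S, G.Adj x y ∧ G.Adj x z ∧ G.Adj y z ∧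
    ∀ w ∈ S, G.Adj x w → w = y ∨ w = z

/-- `itm G`: the largest number of triangles in an induced triangle matching. -/
noncomputable def itm {V : Type*} (G : SimpleGraph V) : ℕ :=
  sSup {k | ∃ S : Finset V, S.card = 3 * k ∧ IsInducedTriangleMatching G S}

/-- `S` induces a matching: within `S`, every vertex has exactly one neighbour. -/
def IsInducedMatching {V : Type*} (G : SimpleGraph V) (S : Finset V) : Prop :=
  ∀ x ∈ S, ∃ y ∈ S, G.Adj x y ∧ ∀ z ∈ S, G.Adj x z → z = y

/-- `im G`: the largest number of edges in an induced matching. -/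
noncomputable def im {V : Type*} (G : SimpleGraph V) : ℕ :=
  sSup {k | ∃ S : Finset V, S.card = 2 * k ∧ IsInducedMatching G S}

/-- The neighbourhood of a set of vertices. -/
def nbhd {V : Type*} (G : SimpleGraph V) (S : Set V) : Set V :=
  {y | ∃ x ∈ S, G.Adj x y}

/-- A set `J` is irredundant if no member's neighbourhood is covered by the
neighbourhoods of the other members. -/
def Irredundant {V : Type*} (G : SimpleGraph V) (J : Set V) : Prop :=
  ∀ x ∈ J, ¬ (G.neighborSet x ⊆ nbhd G (J \ {x}))

/-- `irr G X`: the number of irredundant subsets of `X`. -/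
noncomputable def irr {V : Type*} (G : SimpleGraph V) (X : Set V) : ℕ :=
  Nat.card {J : Set V // J ⊆ X ∧ Irredundant G J}


open Finset

set_option linter.unusedSectionVars false

namespace HT

variable {V : Type*} [DecidableEq V] (G : SimpleGraph V) [DecidableRel G.Adj]

/-- independence for finsets -/
def IndepIn (S : Finset V) : Prop := ∀ x ∈ S, ∀ y ∈ S, ¬ G.Adj x y

instance : DecidablePred (IndepIn G) := fun _ => by unfold IndepIn; infer_instance

/-- maximal independent subset of ground set A -/
def MaxIn (A S : Finset V) : Prop :=
  S ⊆ A ∧ IndepIn G S ∧ ∀ x ∈ A, x ∉ S → ¬ IndepIn G (insert x S)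

instance (A : Finset V) : DecidablePred (MaxIn G A) := fun _ => by unfold MaxIn; infer_instance

/-- number of maximal independent subsets of A -/
def misF (A : Finset V) : ℕ := #(A.powerset.filter (fun S => MaxIn G A S))

/-- neighbourhood of a within A -/
def nbr (A : Finset V) (a : V) : Finset V := A.filter (G.Adj a)

/-- closed neighbourhood -/
def cnb (A : Finset V) (a : V) : Finset V := insert a (nbr G A a)

variable {G}

lemma mem_nbr {A : Finset V} {a x : V} : x ∈ nbr G A a ↔ x ∈ A ∧ G.Adj a x := by
  simp [nbr]

lemma indepIn_insert {S : Finset V} (hind : IndepIn G S) (a : V) :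
    IndepIn G (insert a S) ↔ ∀ z ∈ S, ¬ G.Adj a z := by
  constructor
  · intro h z hz hadj
    exact h a (mem_insert_self a S) z (mem_insert_of_mem hz) hadj
  · intro h x hx y hy hadj
    rcases mem_insert.1 hx with hx1 | hx1
    · rcases mem_insert.1 hy with hy1 | hy1
      · subst hx1; subst hy1; exact G.loopless.irrefl _ hadj
      · subst hx1; exact h y hy1 hadj
    · rcases mem_insert.1 hy with hy1 | hy1
      · subst hy1; exact h x hx1 hadj.symm
      · exact hind x hx1 y hy1 hadj

lemma misF_empty : misF G (∅ : Finset V) = 1 := by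
  have : (∅ : Finset V).powerset.filter (fun S => MaxIn G ∅ S) = {∅} := by
    ext S
    simp only [mem_filter, mem_powerset, subset_empty, mem_singleton]
    constructor
    · rintro ⟨h, _⟩; exact h
    · rintro rfl
      refine ⟨rfl, subset_empty.2 rfl, fun x hx y hy => by simp at hx, fun x hx => by simp at hx⟩
  rw [misF, this, card_singleton]

lemma dominate {A S : Finset V} (hS : MaxIn G A S) {a : V} (ha : a ∈ A) (haS : a ∉ S) :
    ∃ y ∈ S, G.Adj a y := by
  by_contra hc
  push_neg at hc
  exact hS.2.2 a ha haS ((indepIn_insert hS.2.1 a).2 hc)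

/-- restrict a maximal independent set to a smaller ground set avoiding it -/
lemma maxin_sdiff {A S B : Finset V} (hS : MaxIn G A S) (hB : ∀ b ∈ B, b ∉ S) :
    MaxIn G (A \ B) S := by
  refine ⟨fun x hx => mem_sdiff.2 ⟨hS.1 hx, fun hxB => hB x hxB hx⟩, hS.2.1, ?_⟩
  intro x hx hxS
  exact hS.2.2 x (mem_sdiff.1 hx).1 hxS

lemma maxin_erase {A S B : Finset V} (hS : MaxIn G A S) {a : V} (haS : a ∈ S)
    (hB : ∀ b ∈ B, b ∉ S) :
    MaxIn G ((A \ cnb G A a) \ B) (S.erase a) := by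
  have hSA := hS.1
  have hind := hS.2.1
  have hinde : IndepIn G (S.erase a) :=
    fun x hx y hy => hind x (mem_of_mem_erase hx) y (mem_of_mem_erase hy)
  refine ⟨?_, hinde, ?_⟩
  · intro x hx
    have hxS := mem_of_mem_erase hx
    have hxa : x ≠ a := ne_of_mem_erase hx
    refine mem_sdiff.2 ⟨mem_sdiff.2 ⟨hSA hxS, ?_⟩, fun hxB => hB x hxB hxS⟩
    simp only [cnb, mem_insert, mem_nbr]
    rintro (rfl | ⟨-, hadj⟩)
    · exact hxa rfl
    · exact hind a haS x hxS hadj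
  · intro x hx hxS'
    have hx1 := mem_sdiff.1 (mem_sdiff.1 hx).1
    have hxA : x ∈ A := hx1.1
    have hxcnb : x ∉ cnb G A a := hx1.2
    have hxa : x ≠ a := fun h => hxcnb (by rw [h]; exact mem_insert_self a _)
    have hxS : x ∉ S := fun h => hxS' (mem_erase.2 ⟨hxa, h⟩)
    intro hindep
    apply hS.2.2 x hxA hxS
    have hxe : x ∉ S.erase a := hxS'
    have e1 : insert x S = insert a (insert x (S.erase a)) := by
      ext z
      simp only [mem_insert, mem_erase]
      constructor
      · rintro (rfl | hz)
        · exact Or.inr (Or.inl rfl)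
        · by_cases hza : z = a
          · exact Or.inl hza
          · exact Or.inr (Or.inr ⟨hza, hz⟩)
      · rintro (rfl | rfl | ⟨-, hz⟩)
        · exact Or.inr haS
        · exact Or.inl rfl
        · exact Or.inr hz
    rw [e1]
    rw [indepIn_insert hindep a]
    intro z hz
    rcases mem_insert.1 hz with hz1 | hz1
    · subst hz1
      intro hadj
      exact hxcnb (mem_insert_of_mem (mem_nbr.2 ⟨hxA, hadj⟩))
    · exact hind a haS z (mem_of_mem_erase hz1)

lemma maxin_insert {A T : Finset V} {a : V} (ha : a ∈ A)
    (hT : MaxIn G (A \ cnb G A a) T) : MaxIn G A (insert a T) := by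
  have hTA := hT.1
  have haT : ∀ z ∈ T, ¬ G.Adj a z := by
    intro z hz hadj
    have h2 := mem_sdiff.1 (hTA hz)
    exact h2.2 (mem_insert_of_mem (mem_nbr.2 ⟨h2.1, hadj⟩))
  have hindaT : IndepIn G (insert a T) := (indepIn_insert hT.2.1 a).2 haT
  refine ⟨?_, hindaT, ?_⟩
  · intro x hx
    rcases mem_insert.1 hx with hx1 | hx1
    · subst hx1; exact ha
    · exact (mem_sdiff.1 (hTA hx1)).1
  · intro x hxA hxS hindep
    by_cases hxcnb : x ∈ cnb G A a
    · rcases mem_insert.1 hxcnb with hx1 | hx1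
      · exact hxS (hx1 ▸ mem_insert_self _ _)
      · exact hindep x (mem_insert_self _ _) a
          (mem_insert_of_mem (mem_insert_self _ _)) (mem_nbr.1 hx1).2.symm
    · have hxT : x ∉ T := fun h => hxS (mem_insert_of_mem h)
      apply hT.2.2 x (mem_sdiff.2 ⟨hxA, hxcnb⟩) hxT
      have hxa : x ≠ a := fun h => hxcnb (by rw [h]; exact mem_insert_self a _)
      have hindxT : IndepIn G (insert x T) := by
        intro p hp q hq
        apply hindep p ?_ q ?_
        · rcases mem_insert.1 hp with h | h
          · exact h ▸ mem_insert_self _ _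
          · exact mem_insert_of_mem (mem_insert_of_mem h)
        · rcases mem_insert.1 hq with h | h
          · exact h ▸ mem_insert_self _ _
          · exact mem_insert_of_mem (mem_insert_of_mem h)
      exact hindxT

end HT

namespace HT

variable {V : Type*} [DecidableEq V] {G : SimpleGraph V} [DecidableRel G.Adj]

lemma card_filter_split (s : Finset (Finset V)) (p q : Finset V → Prop)
    [DecidablePred p] [DecidablePred q] :
    #(s.filter p) = #(s.filter (fun S => p S ∧ q S)) + #(s.filter (fun S => p S ∧ ¬ q S)) := by
  rw [← card_filter_add_card_filter_not (s := s.filter p) q, filter_filter, filter_filter]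

lemma misF_split (A : Finset V) (q : Finset V → Prop) [DecidablePred q] :
    misF G A = #(A.powerset.filter (fun S => MaxIn G A S ∧ q S))
      + #(A.powerset.filter (fun S => MaxIn G A S ∧ ¬ q S)) := by
  rw [misF, ← card_filter_add_card_filter_not
    (s := A.powerset.filter (fun S => MaxIn G A S)) q, filter_filter, filter_filter]

lemma a_not_mem_of_sub {A : Finset V} {a : V} {T : Finset V}
    (hT : T ⊆ A \ cnb G A a) : a ∉ T := by
  intro h
  exact (mem_sdiff.1 (hT h)).2 (mem_insert_self _ _)

lemma cnt_bij {A : Finset V} {a : V} (ha : a ∈ A) :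
    #(A.powerset.filter (fun S => MaxIn G A S ∧ a ∈ S)) = misF G (A \ cnb G A a) := by
  apply card_bij (fun S _ => S.erase a)
  · intro S hS
    simp only [mem_filter, mem_powerset] at hS ⊢
    obtain ⟨_, hmax, haS⟩ := hS
    have := maxin_erase (B := ∅) hmax haS (by simp)
    rw [sdiff_empty] at this
    exact ⟨this.1, this⟩
  · intro S₁ h₁ S₂ h₂ he
    simp only [mem_filter] at h₁ h₂
    rw [← insert_erase h₁.2.2, ← insert_erase h₂.2.2, he]
  · intro T hT
    simp only [mem_filter, mem_powerset] at hT
    have haT : a ∉ T := a_not_mem_of_sub hT.1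
    refine ⟨insert a T, ?_, ?_⟩
    · simp only [mem_filter, mem_powerset]
      have hmax := maxin_insert ha hT.2
      exact ⟨hmax.1, hmax, mem_insert_self _ _⟩
    · exact erase_insert haT

lemma cnt_inj {A : Finset V} {a : V} (B : Finset V) (ha : a ∈ A) :
    #(A.powerset.filter (fun S => MaxIn G A S ∧ a ∈ S ∧ ∀ b ∈ B, b ∉ S))
      ≤ misF G ((A \ cnb G A a) \ B) := by
  apply card_le_card_of_injOn (fun S => S.erase a)
  · intro S hS
    simp only [mem_filter, mem_powerset] at hS ⊢
    obtain ⟨_, hmax, haS, hB⟩ := mem_filter.1 hS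
    have := maxin_erase hmax haS hB
    exact mem_filter.2 ⟨mem_powerset.2 this.1, this⟩
  · intro S₁ h₁ S₂ h₂ he
    simp only [coe_filter, Set.mem_setOf_eq] at h₁ h₂
    simp only at he
    rw [← insert_erase h₁.2.2.1, ← insert_erase h₂.2.2.1, he]

lemma cnt_avoid {A : Finset V} (B : Finset V) :
    #(A.powerset.filter (fun S => MaxIn G A S ∧ ∀ b ∈ B, b ∉ S)) ≤ misF G (A \ B) := by
  apply card_le_card_of_injOn id
  · intro S hS
    obtain ⟨_, hmax, hB⟩ := mem_filter.1 hS
    have := maxin_sdiff hmax hB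
    exact mem_filter.2 ⟨mem_powerset.2 this.1, this⟩
  · exact fun x _ y _ h => h

lemma card_cnb {A : Finset V} {a : V} (ha : a ∈ A) :
    (cnb G A a).card = (nbr G A a).card + 1 := by
  rw [cnb, card_insert_of_notMem]
  intro h
  exact G.loopless.irrefl a (mem_nbr.1 h).2

lemma cnb_subset {A : Finset V} {a : V} (ha : a ∈ A) : cnb G A a ⊆ A := by
  intro x hx
  rcases mem_insert.1 hx with h | h
  · exact h ▸ ha
  · exact (mem_nbr.1 h).1

lemma card_sdiff_cnb {A : Finset V} {a : V} (ha : a ∈ A) :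
    (A \ cnb G A a).card = A.card - ((nbr G A a).card + 1) := by
  rw [card_sdiff_of_subset (cnb_subset ha), card_cnb ha]

end HT

namespace HT

variable {V : Type*} [DecidableEq V] {G : SimpleGraph V} [DecidableRel G.Adj]

/-- perfect matching condition on ground set -/
def PM (G : SimpleGraph V) (A : Finset V) : Prop := ∀ a ∈ A, ∃! b, b ∈ A ∧ G.Adj a b

lemma card_filter_mono {s : Finset (Finset V)} {p q : Finset V → Prop}
    [DecidablePred p] [DecidablePred q] (h : ∀ S ∈ s, p S → q S) :
    #(s.filter p) ≤ #(s.filter q) :=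
  card_le_card (fun S hS => mem_filter.2 ⟨(mem_filter.1 hS).1, h _ (mem_filter.1 hS).1 (mem_filter.1 hS).2⟩)

lemma notPM_of_no_nbr {A : Finset V} {a : V} (ha : a ∈ A) (h : nbr G A a = ∅) :
    ¬ PM G A := by
  intro hPM
  obtain ⟨b, hb, -⟩ := hPM a ha
  have : b ∈ nbr G A a := mem_nbr.2 ⟨hb.1, hb.2⟩
  rw [h] at this
  exact notMem_empty _ this

lemma notPM_of_two_nbrs {A : Finset V} {a : V} (ha : a ∈ A)
    (h : 2 ≤ (nbr G A a).card) : ¬ PM G A := by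
  intro hPM
  obtain ⟨b₁, hb₁, b₂, hb₂, hne⟩ := Finset.one_lt_card.1 h
  obtain ⟨c, -, hc⟩ := hPM a ha
  rw [mem_nbr] at hb₁ hb₂
  exact hne ((hc b₁ ⟨hb₁.1, hb₁.2⟩).trans (hc b₂ ⟨hb₂.1, hb₂.2⟩).symm)

lemma ssub_helper {A B : Finset V} {a : V} (hBA : B ⊆ A) (ha : a ∈ A) (haB : a ∉ B) :
    B ⊂ A :=
  (Finset.ssubset_iff_of_subset hBA).2 ⟨a, ha, haB⟩

lemma sum2_sq_le (x y : ℕ) : (x + y)^2 ≤ 2 * (x^2 + y^2) := by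
  have h : ((x : ℤ) + y)^2 ≤ 2 * ((x:ℤ)^2 + (y:ℤ)^2) := by nlinarith [sq_nonneg ((x:ℤ) - y)]
  exact_mod_cast h

lemma sum3_sq_le (x y z : ℕ) : (x + y + z)^2 ≤ 3 * (x^2 + y^2 + z^2) := by
  have h : ((x : ℤ) + y + z)^2 ≤ 3 * ((x:ℤ)^2 + (y:ℤ)^2 + (z:ℤ)^2) := by
    nlinarith [sq_nonneg ((x:ℤ) - y), sq_nonneg ((x:ℤ) - z), sq_nonneg ((y:ℤ) - z)]
  exact_mod_cast h

lemma sum4_sq_le (x y z t : ℕ) : (x + y + z + t)^2 ≤ 4 * (x^2 + y^2 + z^2 + t^2) := by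
  have h : ((x : ℤ) + y + z + t)^2 ≤ 4 * ((x:ℤ)^2 + (y:ℤ)^2 + (z:ℤ)^2 + (t:ℤ)^2) := by
    nlinarith [sq_nonneg ((x:ℤ) - y), sq_nonneg ((x:ℤ) - z), sq_nonneg ((y:ℤ) - z),
      sq_nonneg ((x:ℤ) - t), sq_nonneg ((y:ℤ) - t), sq_nonneg ((z:ℤ) - t)]
  exact_mod_cast h

lemma even_of_sq_eq_two_pow {m n : ℕ} (h : m ^ 2 = 2 ^ n) : Even n := by
  have hm : m ≠ 0 := by
    rintro rfl
    norm_num at h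
    exact (pow_ne_zero n two_ne_zero) h.symm
  have h1 : (m ^ 2).factorization 2 = ((2:ℕ) ^ n).factorization 2 := by rw [h]
  rw [Nat.factorization_pow, Nat.Prime.factorization_pow Nat.prime_two] at h1
  simp only [Finsupp.smul_apply, smul_eq_mul, Finsupp.single_eq_same] at h1
  exact ⟨m.factorization 2, by omega⟩

/-- PM transfers across removing an isolated matched pair -/
lemma PM_pair {A : Finset V} {a u : V} (ha : a ∈ A) (hu : u ∈ A) (hau : G.Adj a u)
    (hna : nbr G A a = {u}) (hnu : nbr G A u = {a}) :
    PM G A ↔ PM G (A \ cnb G A a) := by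
  have hne : a ≠ u := G.ne_of_adj hau
  have hmem : ∀ x, x ∈ A \ cnb G A a ↔ x ∈ A ∧ x ≠ a ∧ x ≠ u := by
    intro x
    simp only [mem_sdiff, cnb, hna, mem_insert, mem_singleton]
    tauto
  constructor
  · intro hPM b hb
    rw [hmem] at hb
    obtain ⟨hbA, hba, hbu⟩ := hb
    obtain ⟨c, ⟨hcA, hbc⟩, hc⟩ := hPM b hbA
    have hca : c ≠ a := by
      rintro rfl
      have : b ∈ nbr G A c := mem_nbr.2 ⟨hbA, hbc.symm⟩
      rw [hna] at this
      exact hbu (mem_singleton.1 this)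
    have hcu : c ≠ u := by
      rintro rfl
      have : b ∈ nbr G A c := mem_nbr.2 ⟨hbA, hbc.symm⟩
      rw [hnu] at this
      exact hba (mem_singleton.1 this)
    refine ⟨c, ⟨(hmem c).2 ⟨hcA, hca, hcu⟩, hbc⟩, ?_⟩
    intro c' ⟨hc'm, hbc'⟩
    exact hc c' ⟨((hmem c').1 hc'm).1, hbc'⟩
  · intro hPM b hbA
    by_cases hba : b = a
    · subst hba
      refine ⟨u, ⟨hu, hau⟩, ?_⟩
      intro c ⟨hcA, hbc⟩
      have : c ∈ nbr G A b := mem_nbr.2 ⟨hcA, hbc⟩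
      rw [hna] at this
      exact mem_singleton.1 this
    by_cases hbu : b = u
    · subst hbu
      refine ⟨a, ⟨ha, hau.symm⟩, ?_⟩
      intro c ⟨hcA, hbc⟩
      have : c ∈ nbr G A b := mem_nbr.2 ⟨hcA, hbc⟩
      rw [hnu] at this
      exact mem_singleton.1 this
    · obtain ⟨c, ⟨hcm, hbc⟩, hc⟩ := hPM b ((hmem b).2 ⟨hbA, hba, hbu⟩)
      refine ⟨c, ⟨((hmem c).1 hcm).1, hbc⟩, ?_⟩
      intro c' ⟨hc'A, hbc'⟩
      have hc'a : c' ≠ a := by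
        rintro rfl
        have : b ∈ nbr G A c' := mem_nbr.2 ⟨hbA, hbc'.symm⟩
        rw [hna] at this
        exact hbu (mem_singleton.1 this)
      have hc'u : c' ≠ u := by
        rintro rfl
        have : b ∈ nbr G A c' := mem_nbr.2 ⟨hbA, hbc'.symm⟩
        rw [hnu] at this
        exact hba (mem_singleton.1 this)
      exact hc c' ⟨(hmem c').2 ⟨hc'A, hc'a, hc'u⟩, hbc'⟩

end HT

namespace HT

variable {V : Type*} [DecidableEq V] {G : SimpleGraph V} [DecidableRel G.Adj]

lemma misF_split_mem (A : Finset V) (a : V) :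
    misF G A = #(A.powerset.filter (fun S => MaxIn G A S ∧ a ∈ S))
      + #(A.powerset.filter (fun S => MaxIn G A S ∧ a ∉ S)) :=
  misF_split A (fun S => a ∈ S)

lemma card_filter_iff {s : Finset (Finset V)} {p q : Finset V → Prop}
    [DecidablePred p] [DecidablePred q] (h : ∀ S ∈ s, p S ↔ q S) :
    #(s.filter p) = #(s.filter q) :=
  le_antisymm (card_filter_mono fun S hS hp => (h S hS).1 hp)
    (card_filter_mono fun S hS hq => (h S hS).2 hq)

lemma piece {X mB b c : ℕ} (h1 : X ≤ mB) (h2 : mB^2 ≤ 2^b) (h3 : b ≤ c) : X^2 ≤ 2^c :=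
  le_trans (Nat.pow_le_pow_left h1 2) (le_trans h2 (Nat.pow_le_pow_right (by norm_num) h3))

lemma ssub1 {A : Finset V} {x : V} (hx : x ∈ A) : A \ cnb G A x ⊂ A :=
  ssub_helper sdiff_subset hx (fun h => (mem_sdiff.1 h).2 (mem_insert_self _ _))

lemma ssub2 {A : Finset V} {x : V} (hx : x ∈ A) (B : Finset V) :
    (A \ cnb G A x) \ B ⊂ A :=
  ssub_helper (subset_trans sdiff_subset sdiff_subset) hx
    (fun h => (mem_sdiff.1 (mem_sdiff.1 h).1).2 (mem_insert_self _ _))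

lemma ssub3 {A : Finset V} {a : V} (ha : a ∈ A) {B : Finset V} (haB : a ∈ B) :
    A \ B ⊂ A :=
  ssub_helper sdiff_subset ha (fun h => (mem_sdiff.1 h).2 haB)

theorem main_ind (htf : ∀ {x u w : V}, G.Adj x u → G.Adj x w → G.Adj u w → False)
    (A : Finset V) :
    (misF G A)^2 ≤ 2^A.card ∧ ((misF G A)^2 = 2^A.card ↔ PM G A) := by
  induction A using Finset.strongInduction with
  | _ A IH =>
  rcases A.eq_empty_or_nonempty with rfl | hA
  · refine ⟨by simp [misF_empty], ⟨fun _ => ?_, fun _ => by simp [misF_empty]⟩⟩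
    intro x hx
    exact absurd hx (notMem_empty x)
  obtain ⟨a, haA, hmin⟩ := A.exists_min_image (fun x => (nbr G A x).card) hA
  by_cases hd0 : (nbr G A a).card = 0
  · -- isolated vertex: strict inequality
    have hnbr : nbr G A a = ∅ := card_eq_zero.1 hd0
    have h1 := misF_split_mem (G := G) A a
    have h2 : #(A.powerset.filter (fun S => MaxIn G A S ∧ a ∈ S)) = misF G (A \ cnb G A a) :=
      cnt_bij haA
    have h3 : #(A.powerset.filter (fun S => MaxIn G A S ∧ a ∉ S)) = 0 := by
      rw [card_eq_zero, filter_eq_empty_iff]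
      rintro S hS ⟨hmax, haS⟩
      obtain ⟨y, hyS, hya⟩ := dominate hmax haA haS
      have hy : y ∈ nbr G A a := mem_nbr.2 ⟨hmax.1 hyS, hya⟩
      rw [hnbr] at hy
      exact notMem_empty _ hy
    obtain ⟨hle, -⟩ := IH _ (ssub1 (G := G) haA)
    have hcard := card_sdiff_cnb (G := G) haA
    have hn : 1 ≤ A.card := card_pos.2 hA
    have hlt : (misF G A)^2 < 2^A.card := by
      have e : misF G A = misF G (A \ cnb G A a) := by omega
      have hcc : (A \ cnb G A a).card = A.card - 1 := by omega
      rw [e]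
      calc (misF G (A \ cnb G A a))^2 ≤ 2^(A.card - 1) := hcc ▸ hle
        _ < 2^A.card := Nat.pow_lt_pow_right one_lt_two (by omega)
    exact ⟨hlt.le, fun h => absurd h hlt.ne, fun h => absurd h (notPM_of_no_nbr haA hnbr)⟩
  by_cases hd1 : (nbr G A a).card = 1
  · -- pendant vertex
    obtain ⟨u, hu⟩ := card_eq_one.1 hd1
    have humem : u ∈ nbr G A a := hu ▸ mem_singleton_self u
    have huA : u ∈ A := (mem_nbr.1 humem).1
    have hadj : G.Adj a u := (mem_nbr.1 humem).2
    have hne : a ≠ u := G.ne_of_adj hadj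
    have h1 := misF_split_mem (G := G) A a
    have h2 : #(A.powerset.filter (fun S => MaxIn G A S ∧ a ∈ S)) = misF G (A \ cnb G A a) :=
      cnt_bij haA
    have h3 : #(A.powerset.filter (fun S => MaxIn G A S ∧ a ∉ S))
        = #(A.powerset.filter (fun S => MaxIn G A S ∧ u ∈ S)) := by
      apply card_filter_iff
      intro S hS
      constructor
      · rintro ⟨hmax, haS⟩
        obtain ⟨y, hyS, hya⟩ := dominate hmax haA haS
        have hy : y ∈ nbr G A a := mem_nbr.2 ⟨hmax.1 hyS, hya⟩
        rw [hu, mem_singleton] at hy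
        exact ⟨hmax, hy ▸ hyS⟩
      · rintro ⟨hmax, huS⟩
        exact ⟨hmax, fun haS => hmax.2.1 a haS u huS hadj⟩
    have h4 : #(A.powerset.filter (fun S => MaxIn G A S ∧ u ∈ S)) = misF G (A \ cnb G A u) :=
      cnt_bij huA
    have hamem : a ∈ nbr G A u := mem_nbr.2 ⟨haA, hadj.symm⟩
    have hca := card_sdiff_cnb (G := G) haA
    have hcu := card_sdiff_cnb (G := G) huA
    have hn2 : 2 ≤ A.card := Finset.one_lt_card.2 ⟨a, haA, u, huA, hne⟩
    by_cases hku : (nbr G A u).card = 1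
    · -- isolated edge: exact doubling
      have hnu : nbr G A u = {a} := by
        obtain ⟨b, hb⟩ := card_eq_one.1 hku
        rw [hb] at hamem ⊢
        rw [mem_singleton] at hamem
        rw [← hamem]
      have hsame : A \ cnb G A u = A \ cnb G A a := by
        rw [cnb, cnb, hu, hnu]
        congr 1
        exact pair_comm u a
      obtain ⟨hle, hiff⟩ := IH _ (ssub1 (G := G) haA)
      have hmis : misF G A = 2 * misF G (A \ cnb G A a) := by
        rw [h1, h2, h3, h4, hsame]
        ring
      have h2n : 2 ^ A.card = 4 * 2 ^ (A \ cnb G A a).card := by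
        have e : (A \ cnb G A a).card + 2 = A.card := by omega
        rw [← e, pow_add]
        ring
      have hPMiff := PM_pair haA huA hadj hu hnu
      have esq : (2 * misF G (A \ cnb G A a))^2 = 4 * (misF G (A \ cnb G A a))^2 := by ring
      have hmsq : (misF G A)^2 = 4 * (misF G (A \ cnb G A a))^2 := by rw [hmis, esq]
      constructor
      · omega
      · constructor
        · intro h
          exact hPMiff.2 (hiff.1 (by omega))
        · intro h
          have := hiff.2 (hPMiff.1 h)
          omega
    · -- the pendant neighbour has degree ≥ 2 : strict
      have hku2 : 2 ≤ (nbr G A u).card := by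
        have : 1 ≤ (nbr G A u).card := card_pos.2 ⟨a, hamem⟩
        omega
      have hn3 : 3 ≤ A.card := by
        have hsub : cnb G A u ⊆ A := cnb_subset huA
        have := card_le_card hsub
        have := card_cnb (G := G) huA
        omega
      obtain ⟨n3, hn3e⟩ : ∃ k, A.card = k + 3 := ⟨A.card - 3, by omega⟩
      obtain ⟨hleX, -⟩ := IH _ (ssub1 (G := G) haA)
      obtain ⟨hleY, -⟩ := IH _ (ssub1 (G := G) huA)
      have hX2 : (#(A.powerset.filter (fun S => MaxIn G A S ∧ a ∈ S)))^2 ≤ 2^(n3 + 1) :=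
        piece h2.le hleX (by omega)
      have hY2 : (#(A.powerset.filter (fun S => MaxIn G A S ∧ a ∉ S)))^2 ≤ 2^n3 :=
        piece (le_of_eq (h3.trans h4)) hleY (by omega)
      have hsq := sum2_sq_le (#(A.powerset.filter (fun S => MaxIn G A S ∧ a ∈ S)))
        (#(A.powerset.filter (fun S => MaxIn G A S ∧ a ∉ S)))
      have e1 : 2^(n3+1) = 2 * 2^n3 := by rw [pow_succ]; ring
      have e3 : 2^A.card = 8 * 2^n3 := by rw [hn3e, pow_add]; ring
      have hp : 0 < 2^n3 := Nat.pow_pos (by norm_num)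
      have hmsq : (misF G A)^2 = (#(A.powerset.filter (fun S => MaxIn G A S ∧ a ∈ S))
        + #(A.powerset.filter (fun S => MaxIn G A S ∧ a ∉ S)))^2 := by rw [h1]
      have hlt : (misF G A)^2 < 2^A.card := by omega
      exact ⟨hlt.le, fun h => absurd h hlt.ne,
        fun h => absurd h (notPM_of_two_nbrs huA hku2)⟩
  · -- minimum degree ≥ 2 : always strict
    have hd2all : ∀ x ∈ A, 2 ≤ (nbr G A x).card := by
      intro x hx
      have := hmin x hx
      omega
    have hd2 : 2 ≤ (nbr G A a).card := hd2all a haA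
    have hnpm : ¬ PM G A := notPM_of_two_nbrs haA hd2
    suffices hlt : (misF G A)^2 < 2^A.card by
      exact ⟨hlt.le, fun h => absurd h hlt.ne, fun h => absurd h hnpm⟩
    by_cases hc2 : (nbr G A a).card = 2
    · -- degree exactly 2
      obtain ⟨u, w, huw, huwe⟩ := card_eq_two.1 hc2
      have humem : u ∈ nbr G A a := by rw [huwe]; exact mem_insert_self _ _
      have hwmem : w ∈ nbr G A a := by rw [huwe]; simp
      have huA : u ∈ A := (mem_nbr.1 humem).1
      have hwA : w ∈ A := (mem_nbr.1 hwmem).1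
      have hadju : G.Adj a u := (mem_nbr.1 humem).2
      have hadjw : G.Adj a w := (mem_nbr.1 hwmem).2
      have hnadj : ¬ G.Adj w u := fun h => htf hadjw hadju h
      have hucnbw : u ∉ cnb G A w := by
        simp only [cnb, mem_insert, mem_nbr]
        rintro (rfl | ⟨-, h⟩)
        · exact huw rfl
        · exact hnadj h
      have h1 := misF_split_mem (G := G) A a
      have h2 := card_filter_split (A.powerset) (fun S => MaxIn G A S ∧ a ∉ S)
        (fun S => u ∈ S)
      set X := #(A.powerset.filter (fun S => MaxIn G A S ∧ a ∈ S)) with hXdef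
      set R := #(A.powerset.filter (fun S => MaxIn G A S ∧ a ∉ S)) with hRdef
      set Y := #(A.powerset.filter (fun S => (MaxIn G A S ∧ a ∉ S) ∧ u ∈ S)) with hYdef
      set Z := #(A.powerset.filter (fun S => (MaxIn G A S ∧ a ∉ S) ∧ u ∉ S)) with hZdef
      -- piece bounds
      have hXb : X ≤ misF G (A \ cnb G A a) := (cnt_bij haA).le
      have hYb : Y ≤ misF G (A \ cnb G A u) := by
        refine le_trans (card_filter_mono ?_) (cnt_bij huA).le
        rintro S hS ⟨⟨hm, -⟩, hu'⟩
        exact ⟨hm, hu'⟩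
      have hZb : Z ≤ misF G ((A \ cnb G A w) \ {u}) := by
        refine le_trans (card_filter_mono ?_) (cnt_inj {u} hwA)
        rintro S hS ⟨⟨hm, ha'⟩, hu'⟩
        obtain ⟨y, hyS, hya⟩ := dominate hm haA ha'
        have hy : y ∈ nbr G A a := mem_nbr.2 ⟨hm.1 hyS, hya⟩
        rw [huwe, mem_insert, mem_singleton] at hy
        rcases hy with rfl | rfl
        · exact absurd hyS hu'
        · exact ⟨hm, hyS, by simpa using hu'⟩
      -- cardinalities
      have hca := card_sdiff_cnb (G := G) haA
      have hcu := card_sdiff_cnb (G := G) huA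
      have hcw := card_sdiff_cnb (G := G) hwA
      have hcw2 : ((A \ cnb G A w) \ {u}).card = (A \ cnb G A w).card - 1 := by
        rw [card_sdiff_of_subset (singleton_subset_iff.2 (mem_sdiff.2 ⟨huA, hucnbw⟩)), card_singleton]
      have hn4 : 4 ≤ A.card := by
        have hsub : insert u (cnb G A w) ⊆ A := insert_subset huA (cnb_subset hwA)
        have hcard := card_le_card hsub
        rw [card_insert_of_notMem hucnbw, card_cnb (G := G) hwA] at hcard
        have := hd2all w hwA
        omega
      obtain ⟨n4, hn4e⟩ : ∃ k, A.card = k + 4 := ⟨A.card - 4, by omega⟩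
      have hdu := hd2all u huA
      have hdw := hd2all w hwA
      obtain ⟨hleX, -⟩ := IH _ (ssub1 (G := G) haA)
      obtain ⟨hleY, -⟩ := IH _ (ssub1 (G := G) huA)
      obtain ⟨hleZ, -⟩ := IH _ (ssub2 (G := G) hwA {u})
      have hX2 : X^2 ≤ 2^(n4+1) := piece hXb hleX (by omega)
      have hY2 : Y^2 ≤ 2^(n4+1) := piece hYb hleY (by omega)
      have hZ2 : Z^2 ≤ 2^n4 := piece hZb hleZ (by omega)
      have hsum : misF G A = X + Y + Z := by omega
      have hmsq : (misF G A)^2 = (X + Y + Z)^2 := by rw [hsum]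
      have hsq := sum3_sq_le X Y Z
      have e1 : 2^(n4+1) = 2 * 2^n4 := by rw [pow_succ]; ring
      have e3 : 2^A.card = 16 * 2^n4 := by rw [hn4e, pow_add]; ring
      have hp : 0 < 2^n4 := Nat.pow_pos (by norm_num)
      omega
    · by_cases hc3 : (nbr G A a).card = 3
      · -- degree exactly 3
        obtain ⟨u₁, u₂, u₃, h12, h13, h23, he⟩ := card_eq_three.1 hc3
        have h1mem : u₁ ∈ nbr G A a := by rw [he]; simp
        have h2mem : u₂ ∈ nbr G A a := by rw [he]; simp
        have h3mem : u₃ ∈ nbr G A a := by rw [he]; simp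
        have hu1A : u₁ ∈ A := (mem_nbr.1 h1mem).1
        have hu2A : u₂ ∈ A := (mem_nbr.1 h2mem).1
        have hu3A : u₃ ∈ A := (mem_nbr.1 h3mem).1
        have hadj1 : G.Adj a u₁ := (mem_nbr.1 h1mem).2
        have hadj2 : G.Adj a u₂ := (mem_nbr.1 h2mem).2
        have hadj3 : G.Adj a u₃ := (mem_nbr.1 h3mem).2
        have hn12 : u₁ ∉ cnb G A u₂ := by
          simp only [cnb, mem_insert, mem_nbr]
          rintro (rfl | ⟨-, h⟩)
          · exact h12 rfl
          · exact htf hadj2 hadj1 h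
        have hn13 : u₁ ∉ cnb G A u₃ := by
          simp only [cnb, mem_insert, mem_nbr]
          rintro (rfl | ⟨-, h⟩)
          · exact h13 rfl
          · exact htf hadj3 hadj1 h
        have hn23 : u₂ ∉ cnb G A u₃ := by
          simp only [cnb, mem_insert, mem_nbr]
          rintro (rfl | ⟨-, h⟩)
          · exact h23 rfl
          · exact htf hadj3 hadj2 h
        have h1 := misF_split_mem (G := G) A a
        have h2 := card_filter_split (A.powerset) (fun S => MaxIn G A S ∧ a ∉ S)
          (fun S => u₁ ∈ S)
        have h3 := card_filter_split (A.powerset)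
          (fun S => (MaxIn G A S ∧ a ∉ S) ∧ u₁ ∉ S) (fun S => u₂ ∈ S)
        set X := #(A.powerset.filter (fun S => MaxIn G A S ∧ a ∈ S)) with hXdef
        set Y1 := #(A.powerset.filter (fun S => (MaxIn G A S ∧ a ∉ S) ∧ u₁ ∈ S)) with hY1def
        set Y2 := #(A.powerset.filter
          (fun S => ((MaxIn G A S ∧ a ∉ S) ∧ u₁ ∉ S) ∧ u₂ ∈ S)) with hY2def
        set Y3 := #(A.powerset.filter
          (fun S => ((MaxIn G A S ∧ a ∉ S) ∧ u₁ ∉ S) ∧ u₂ ∉ S)) with hY3def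
        have hXb : X ≤ misF G (A \ cnb G A a) := (cnt_bij haA).le
        have hY1b : Y1 ≤ misF G (A \ cnb G A u₁) := by
          refine le_trans (card_filter_mono ?_) (cnt_bij hu1A).le
          rintro S hS ⟨⟨hm, -⟩, hu'⟩
          exact ⟨hm, hu'⟩
        have hY2b : Y2 ≤ misF G ((A \ cnb G A u₂) \ {u₁}) := by
          refine le_trans (card_filter_mono ?_) (cnt_inj {u₁} hu2A)
          rintro S hS ⟨⟨⟨hm, -⟩, hnu1⟩, hu'⟩
          exact ⟨hm, hu', by simpa using hnu1⟩
        have hY3b : Y3 ≤ misF G ((A \ cnb G A u₃) \ {u₁, u₂}) := by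
          refine le_trans (card_filter_mono ?_) (cnt_inj {u₁, u₂} hu3A)
          rintro S hS ⟨⟨⟨hm, ha'⟩, hnu1⟩, hnu2⟩
          obtain ⟨y, hyS, hya⟩ := dominate hm haA ha'
          have hy : y ∈ nbr G A a := mem_nbr.2 ⟨hm.1 hyS, hya⟩
          rw [he, mem_insert, mem_insert, mem_singleton] at hy
          rcases hy with rfl | rfl | rfl
          · exact absurd hyS hnu1
          · exact absurd hyS hnu2
          · refine ⟨hm, hyS, ?_⟩
            intro b hb
            rw [mem_insert, mem_singleton] at hb
            rcases hb with rfl | rfl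
            · exact hnu1
            · exact hnu2
        have hca := card_sdiff_cnb (G := G) haA
        have hcu1 := card_sdiff_cnb (G := G) hu1A
        have hcu2 := card_sdiff_cnb (G := G) hu2A
        have hcu3 := card_sdiff_cnb (G := G) hu3A
        have hcu2' : ((A \ cnb G A u₂) \ {u₁}).card = (A \ cnb G A u₂).card - 1 := by
          rw [card_sdiff_of_subset (singleton_subset_iff.2 (mem_sdiff.2 ⟨hu1A, hn12⟩)), card_singleton]
        have hsub12 : {u₁, u₂} ⊆ A \ cnb G A u₃ := by
          intro b hb
          rw [mem_insert, mem_singleton] at hb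
          rcases hb with rfl | rfl
          · exact mem_sdiff.2 ⟨hu1A, hn13⟩
          · exact mem_sdiff.2 ⟨hu2A, hn23⟩
        have hc12 : ({u₁, u₂} : Finset V).card = 2 := by
          rw [card_insert_of_notMem (by simpa using h12), card_singleton]
        have hcu3' : ((A \ cnb G A u₃) \ {u₁, u₂}).card = (A \ cnb G A u₃).card - 2 := by
          rw [card_sdiff_of_subset hsub12, hc12]
        have hn6 : 6 ≤ A.card := by
          have hsub : insert u₁ (insert u₂ (cnb G A u₃)) ⊆ A := by
            refine insert_subset hu1A (insert_subset hu2A (cnb_subset hu3A))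
          have hcard := card_le_card hsub
          have e1 : u₁ ∉ insert u₂ (cnb G A u₃) := by
            rw [mem_insert]
            rintro (rfl | h)
            · exact h12 rfl
            · exact hn13 h
          rw [card_insert_of_notMem e1, card_insert_of_notMem hn23,
            card_cnb (G := G) hu3A] at hcard
          have := hmin u₃ hu3A
          omega
        obtain ⟨n6, hn6e⟩ : ∃ k, A.card = k + 6 := ⟨A.card - 6, by omega⟩
        have hdu1 : 3 ≤ (nbr G A u₁).card := by have := hmin u₁ hu1A; omega
        have hdu2 : 3 ≤ (nbr G A u₂).card := by have := hmin u₂ hu2A; omega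
        have hdu3 : 3 ≤ (nbr G A u₃).card := by have := hmin u₃ hu3A; omega
        obtain ⟨hleX, -⟩ := IH _ (ssub1 (G := G) haA)
        obtain ⟨hleY1, -⟩ := IH _ (ssub1 (G := G) hu1A)
        obtain ⟨hleY2, -⟩ := IH _ (ssub2 (G := G) hu2A {u₁})
        obtain ⟨hleY3, -⟩ := IH _ (ssub2 (G := G) hu3A {u₁, u₂})
        have hX2 : X^2 ≤ 2^(n6+2) := piece hXb hleX (by omega)
        have hY12 : Y1^2 ≤ 2^(n6+2) := piece hY1b hleY1 (by omega)
        have hY22 : Y2^2 ≤ 2^(n6+1) := piece hY2b hleY2 (by omega)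
        have hY32 : Y3^2 ≤ 2^n6 := piece hY3b hleY3 (by omega)
        have hsum : misF G A = X + Y1 + Y2 + Y3 := by omega
        have hmsq : (misF G A)^2 = (X + Y1 + Y2 + Y3)^2 := by rw [hsum]
        have hsq := sum4_sq_le X Y1 Y2 Y3
        have e1 : 2^(n6+1) = 2 * 2^n6 := by rw [pow_succ]; ring
        have e2 : 2^(n6+2) = 4 * 2^n6 := by rw [pow_add]; ring
        have e3 : 2^A.card = 64 * 2^n6 := by rw [hn6e, pow_add]; ring
        have hp : 0 < 2^n6 := Nat.pow_pos (by norm_num)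
        omega
      · -- degree at least 4
        have hc4 : 4 ≤ (nbr G A a).card := by omega
        obtain ⟨u, humem⟩ := card_pos.1 (show 0 < (nbr G A a).card by omega)
        have huA : u ∈ A := (mem_nbr.1 humem).1
        have hadju : G.Adj a u := (mem_nbr.1 humem).2
        have hneau : a ≠ u := G.ne_of_adj hadju
        have h1 := misF_split_mem (G := G) A a
        have h2 := card_filter_split (A.powerset) (fun S => MaxIn G A S ∧ a ∉ S)
          (fun S => u ∈ S)
        set X := #(A.powerset.filter (fun S => MaxIn G A S ∧ a ∈ S)) with hXdef
        set Y := #(A.powerset.filter (fun S => (MaxIn G A S ∧ a ∉ S) ∧ u ∈ S)) with hYdef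
        set Z := #(A.powerset.filter (fun S => (MaxIn G A S ∧ a ∉ S) ∧ u ∉ S)) with hZdef
        have hXb : X ≤ misF G (A \ cnb G A a) := (cnt_bij haA).le
        have hYb : Y ≤ misF G (A \ cnb G A u) := by
          refine le_trans (card_filter_mono ?_) (cnt_bij huA).le
          rintro S hS ⟨⟨hm, -⟩, hu'⟩
          exact ⟨hm, hu'⟩
        have hZb : Z ≤ misF G (A \ {a, u}) := by
          refine le_trans (card_filter_mono ?_) (cnt_avoid {a, u})
          rintro S hS ⟨⟨hm, ha'⟩, hu'⟩
          refine ⟨hm, ?_⟩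
          intro b hb
          rw [mem_insert, mem_singleton] at hb
          rcases hb with rfl | rfl
          · exact ha'
          · exact hu'
        have hca := card_sdiff_cnb (G := G) haA
        have hcu := card_sdiff_cnb (G := G) huA
        have hsubau : {a, u} ⊆ A := by
          intro b hb
          rw [mem_insert, mem_singleton] at hb
          rcases hb with rfl | rfl
          · exact haA
          · exact huA
        have hcau : ({a, u} : Finset V).card = 2 := by
          rw [card_insert_of_notMem (by simpa using hneau), card_singleton]
        have hcAau : (A \ {a, u}).card = A.card - 2 := by
          rw [card_sdiff_of_subset hsubau, hcau]
        have hn5 : 5 ≤ A.card := by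
          have hcard := card_le_card (cnb_subset (G := G) haA)
          rw [card_cnb (G := G) haA] at hcard
          omega
        obtain ⟨n5, hn5e⟩ : ∃ k, A.card = k + 5 := ⟨A.card - 5, by omega⟩
        have hdu : 4 ≤ (nbr G A u).card := by have := hmin u huA; omega
        obtain ⟨hleX, -⟩ := IH _ (ssub1 (G := G) haA)
        obtain ⟨hleY, -⟩ := IH _ (ssub1 (G := G) huA)
        obtain ⟨hleZ, -⟩ := IH _ (ssub3 haA (show a ∈ ({a,u} : Finset V) from mem_insert_self a {u}))
        have hX2 : X^2 ≤ 2^n5 := piece hXb hleX (by omega)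
        have hY2 : Y^2 ≤ 2^n5 := piece hYb hleY (by omega)
        have hZ2 : Z^2 ≤ 2^(n5+3) := piece hZb hleZ (by omega)
        have hsum : misF G A = X + Y + Z := by omega
        have hmsq : (misF G A)^2 = (X + Y + Z)^2 := by rw [hsum]
        have hsq := sum3_sq_le X Y Z
        have e1 : 2^(n5+3) = 8 * 2^n5 := by rw [pow_add]; ring
        have e3 : 2^A.card = 32 * 2^n5 := by rw [hn5e, pow_add]; ring
        have hp : 0 < 2^n5 := Nat.pow_pos (by norm_num)
        omega

end HT

namespace HT

variable {V : Type*} [Fintype V] [DecidableEq V] {G : SimpleGraph V} [DecidableRel G.Adj]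

lemma isMaxIndep_iff {s : Set V} :
    IsIndepSet G s ∧ (∀ t, IsIndepSet G t → s ⊆ t → s = t)
      ↔ MaxIn G univ (Set.toFinite s).toFinset := by
  constructor
  · rintro ⟨hi, hmax⟩
    refine ⟨subset_univ _, ?_, ?_⟩
    · intro x hx y hy
      exact hi ((Set.Finite.mem_toFinset _).1 hx) ((Set.Finite.mem_toFinset _).1 hy)
    · intro x _ hxF hind
      have hxs : x ∉ s := fun h => hxF ((Set.Finite.mem_toFinset _).2 h)
      have hti : IsIndepSet G (insert x s) := by
        intro p hp q hq
        refine hind p ?_ q ?_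
        · rcases Set.mem_insert_iff.1 hp with rfl | hp'
          · exact mem_insert_self _ _
          · exact Finset.mem_insert_of_mem ((Set.Finite.mem_toFinset _).2 hp')
        · rcases Set.mem_insert_iff.1 hq with rfl | hq'
          · exact mem_insert_self _ _
          · exact Finset.mem_insert_of_mem ((Set.Finite.mem_toFinset _).2 hq')
      have := hmax _ hti (Set.subset_insert x s)
      exact hxs (this ▸ Set.mem_insert x s)
  · rintro ⟨-, hi, hmax⟩
    constructor
    · intro x hx y hy
      exact hi x ((Set.Finite.mem_toFinset _).2 hx) y ((Set.Finite.mem_toFinset _).2 hy)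
    · intro t hti hst
      by_contra hne
      obtain ⟨x, hxt, hxs⟩ : ∃ x, x ∈ t ∧ x ∉ s := by
        by_contra hc
        push_neg at hc
        exact hne (Set.Subset.antisymm hst hc)
      apply hmax x (mem_univ x) (fun h => hxs ((Set.Finite.mem_toFinset _).1 h))
      intro p hp q hq
      have hmem : ∀ z, z ∈ insert x (Set.toFinite s).toFinset → z ∈ t := by
        intro z hz
        rcases mem_insert.1 hz with rfl | hz'
        · exact hxt
        · exact hst ((Set.Finite.mem_toFinset _).1 hz')
      exact hti (hmem p hp) (hmem q hq)

lemma toFinset_coe (S : Finset V) : (Set.toFinite (↑S : Set V)).toFinset = S := by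
  ext x
  simp [Set.Finite.mem_toFinset]

lemma mis_eq_misF : mis G = misF G (univ : Finset V) := by
  have he : {s : Set V // IsMaxIndepSet G s} ≃ {S : Finset V // MaxIn G univ S} :=
    { toFun := fun s => ⟨(Set.toFinite s.1).toFinset, isMaxIndep_iff.1 s.2⟩
      invFun := fun S => ⟨(↑S.1 : Set V), isMaxIndep_iff.2 (by rw [toFinset_coe]; exact S.2)⟩
      left_inv := fun s => Subtype.ext (Set.Finite.coe_toFinset _)
      right_inv := fun S => Subtype.ext (toFinset_coe S.1) }
  rw [mis, Nat.card_congr he, Nat.card_eq_fintype_card, Fintype.card_subtype, misF,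
    powerset_univ]

lemma pm_univ : PM G (univ : Finset V) ↔ ∀ v : V, ∃! w : V, G.Adj v w := by
  constructor
  · intro h v
    obtain ⟨w, ⟨-, hadj⟩, huniq⟩ := h v (mem_univ v)
    exact ⟨w, hadj, fun y hy => huniq y ⟨mem_univ y, hy⟩⟩
  · intro h a _
    obtain ⟨w, hadj, huniq⟩ := h a
    exact ⟨w, ⟨mem_univ w, hadj⟩, fun y hy => huniq y hy.2⟩

end HT

theorem hujter_tuza {V : Type*} [Fintype V] (G : SimpleGraph V)
    (htf : G.CliqueFree 3) :
    (mis G : ℝ) ≤ 2 ^ ((Fintype.card V : ℝ) / 2) ∧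
    ((mis G : ℝ) = 2 ^ ((Fintype.card V : ℝ) / 2) ↔
      Even (Fintype.card V) ∧ ∀ v : V, ∃! w : V, G.Adj v w) := by
  classical
  have tri : ∀ {x u w : V}, G.Adj x u → G.Adj x w → G.Adj u w → False := fun h1 h2 h3 =>
    htf _ (SimpleGraph.is3Clique_triple_iff.2 ⟨h1, h2, h3⟩)
  obtain ⟨hle, hiff⟩ := HT.main_ind tri (Finset.univ : Finset V)
  rw [Finset.card_univ] at hle hiff
  rw [HT.mis_eq_misF]
  set n := Fintype.card V with hn
  set m := HT.misF G Finset.univ with hm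
  set r : ℝ := (2 : ℝ) ^ ((n : ℝ) / 2) with hr
  have hrpos : 0 < r := Real.rpow_pos_of_pos (by norm_num) _
  have hr2 : r ^ (2:ℕ) = ((2 ^ n : ℕ) : ℝ) := by
    rw [hr, ← Real.rpow_natCast ((2:ℝ) ^ ((n:ℝ)/2)) 2, ← Real.rpow_mul (by norm_num : (0:ℝ) ≤ 2),
      show (n:ℝ)/2 * ((2:ℕ):ℝ) = ((n:ℕ):ℝ) by push_cast; ring, Real.rpow_natCast]
    push_cast
    ring
  have hmler : (m : ℝ) ≤ r := by
    apply le_of_pow_le_pow_left₀ (n := 2) (by norm_num) hrpos.le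
    rw [hr2]
    have : ((m : ℝ)) ^ (2:ℕ) = ((m ^ 2 : ℕ) : ℝ) := by push_cast; ring
    rw [this]
    exact_mod_cast hle
  have heq : (m : ℝ) = r ↔ m ^ 2 = 2 ^ n := by
    constructor
    · intro h
      have : ((m ^ 2 : ℕ) : ℝ) = ((2 ^ n : ℕ) : ℝ) := by
        rw [← hr2, ← h]
        push_cast
        ring
      exact_mod_cast this
    · intro h
      have h2 : (m : ℝ) ^ (2:ℕ) = r ^ (2:ℕ) := by
        rw [hr2]
        push_cast [← h]
        ring
      have hge : r ≤ (m : ℝ) :=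
        le_of_pow_le_pow_left₀ (by norm_num) (Nat.cast_nonneg m) (le_of_eq h2.symm)
      exact le_antisymm hmler hge
  refine ⟨hmler, ?_⟩
  rw [heq]
  constructor
  · intro h
    exact ⟨HT.even_of_sq_eq_two_pow h, HT.pm_univ.1 (hiff.1 h)⟩
  · rintro ⟨-, h⟩
    exact hiff.2 (HT.pm_univ.2 h)
end

section
/- For m ≥ 2, let B_m be the bipartite graph with parts X = {1,…,m} and Y = {1,…,2m} (disjoint copies) where, for x ∈ X with x ≤ m−1, x is adjacent to y ∈ Y iff y = x or y = m−1+x, and the vertex x = m is adjacent to y ∈ Y iff m ≤ y ≤ 2m−2. Then im(B_m) = m − 1 and mis(B_m) = 2^m − 1. -/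
/-- The graph `Bm m` on `X = Fin m` and `Y = Fin (2*m)` (0-indexed version of the
paper's 1-indexed construction): for `x` with `x + 1 ≤ m - 1`, `x ~ y` iff `y = x` or
`y = (m-1) + x`; the last vertex `x = m - 1` of `X` is adjacent to `y` iff
`m - 1 ≤ y ≤ 2*m - 3`. -/
def Bgraph (m : ℕ) : SimpleGraph (Fin m ⊕ Fin (2 * m)) :=
  SimpleGraph.fromRel (fun a b =>
    match a, b with
    | Sum.inl x, Sum.inr y =>
        (x.val < m - 1 ∧ (y.val = x.val ∨ y.val = m - 1 + x.val)) ∨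
        (x.val = m - 1 ∧ m - 1 ≤ y.val ∧ y.val ≤ 2 * m - 3)
    | _, _ => False)

/-! The induced matching `{xᵢ, yᵢ : i < m - 1}` is optimal: an induced matching of a graph with
no edges inside `Y` has at least as many vertices in `X` as in `Y`, and it cannot contain all of
`X`, since the partner `y` of the last vertex of `X` has a second neighbour `y - (m - 1)` in `X`.
A maximal independent set of a bipartite graph is determined by its trace `A` on `X`: it is `A`
together with the non-neighbours of `A` in `Y`. For `B_m` every `A ⊆ X` arises this way except
`A = {x : x < m - 1}`, whose non-neighbours in `Y` all see the last vertex of `X`. -/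

open Finset Sum

theorem IsInducedMatching.eq_of_adj {V : Type*} {G : SimpleGraph V} {S : Finset V}
    (hS : IsInducedMatching G S) {x y z : V} (hx : x ∈ S) (hy : y ∈ S) (hz : z ∈ S)
    (hxy : G.Adj x y) (hxz : G.Adj x z) : y = z := by
  obtain ⟨w, -, -, hw⟩ := hS x hx
  rw [hw y hy hxy, hw z hz hxz]

theorem im_eq_of_isGreatest {V : Type*} {G : SimpleGraph V} {k : ℕ}
    (hk : ∃ S : Finset V, #S = 2 * k ∧ IsInducedMatching G S)
    (hle : ∀ (j : ℕ) (S : Finset V), #S = 2 * j → IsInducedMatching G S → j ≤ k) :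
    im G = k :=
  IsGreatest.csSup_eq ⟨hk, fun j ⟨S, hS, hSm⟩ => hle j S hS hSm⟩

theorem isMaxIndepSet_iff {V : Type*} {G : SimpleGraph V} {s : Set V} :
    IsMaxIndepSet G s ↔ IsIndepSet G s ∧ ∀ v ∉ s, ∃ w ∈ s, G.Adj v w := by
  refine ⟨fun ⟨hs, hmax⟩ => ⟨hs, fun v hv => ?_⟩,
    fun ⟨hs, hdom⟩ => ⟨hs, fun t ht hst => ?_⟩⟩
  · by_contra! hnadj
    have hins : IsIndepSet G (insert v s) := by
      rintro x (rfl | hx) y (rfl | hy) hxy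
      · exact hxy.ne rfl
      · exact hnadj y hy hxy
      · exact hnadj x hx hxy.symm
      · exact hs hx hy hxy
    exact hv ((hmax _ hins (Set.subset_insert v s)) ▸ Set.mem_insert v s)
  · refine hst.antisymm fun v hvt => ?_
    by_contra hvs
    obtain ⟨w, hws, hvw⟩ := hdom v hvs
    exact ht hvt (hst hws) hvw

section Bipartite

variable {α β : Type*} {G : SimpleGraph (α ⊕ β)}

def fillRight (G : SimpleGraph (α ⊕ β)) (A : Set α) : Set (α ⊕ β) :=
  {v | Sum.elim (· ∈ A) (fun b => ∀ a ∈ A, ¬ G.Adj (inl a) (inr b)) v}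

def IsFillable (G : SimpleGraph (α ⊕ β)) (A : Set α) : Prop :=
  ∀ x ∉ A, ∃ b, G.Adj (inl x) (inr b) ∧ ∀ a ∈ A, ¬ G.Adj (inl a) (inr b)

theorem isIndepSet_fillRight (hL : ∀ a a', ¬ G.Adj (inl a) (inl a'))
    (hR : ∀ b b', ¬ G.Adj (inr b) (inr b')) (A : Set α) : IsIndepSet G (fillRight G A) := by
  rintro (a | b) ha (a' | b') ha' hadj
  · exact hL a a' hadj
  · exact ha' a ha hadj
  · exact ha a' ha' hadj.symm
  · exact hR b b' hadj

theorem fillRight_setOf_inl_mem (hR : ∀ b b', ¬ G.Adj (inr b) (inr b')) {s : Set (α ⊕ β)}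
    (hs : IsMaxIndepSet G s) : fillRight G {a | inl a ∈ s} = s := by
  ext (a | b)
  · exact Iff.rfl
  refine ⟨fun hb => ?_, fun hb a ha hadj => hs.1 ha hb hadj⟩
  by_contra hbs
  obtain ⟨(a | b'), hw, hadj⟩ := (isMaxIndepSet_iff.1 hs).2 (inr b) hbs
  · exact hb a hw hadj.symm
  · exact hR b b' hadj

theorem isMaxIndepSet_fillRight_iff (hL : ∀ a a', ¬ G.Adj (inl a) (inl a'))
    (hR : ∀ b b', ¬ G.Adj (inr b) (inr b')) (A : Set α) :
    IsMaxIndepSet G (fillRight G A) ↔ IsFillable G A := by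
  rw [isMaxIndepSet_iff, and_iff_right (isIndepSet_fillRight hL hR A)]
  refine ⟨fun h x hx => ?_, fun h => ?_⟩
  · obtain ⟨(a | b), hw, hadj⟩ := h (inl x) hx
    · exact absurd hadj (hL x a)
    · exact ⟨b, hadj, hw⟩
  · rintro (x | b) hv
    · obtain ⟨b, hadj, hb⟩ := h x hv
      exact ⟨inr b, hb, hadj⟩
    · obtain ⟨a, ha, hadj⟩ : ∃ a ∈ A, G.Adj (inl a) (inr b) := by
        by_contra! h; exact hv h
      exact ⟨inl a, ha, hadj.symm⟩

theorem mis_eq_card_isFillable (hL : ∀ a a', ¬ G.Adj (inl a) (inl a'))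
    (hR : ∀ b b', ¬ G.Adj (inr b) (inr b')) : mis G = Nat.card {A : Set α // IsFillable G A} :=
  Nat.card_congr
    { toFun := fun s => ⟨{a | inl a ∈ s.1}, by
        rw [← isMaxIndepSet_fillRight_iff hL hR, fillRight_setOf_inl_mem hR s.2]; exact s.2⟩
      invFun := fun A => ⟨fillRight G A, (isMaxIndepSet_fillRight_iff hL hR A).2 A.2⟩
      left_inv := fun s => Subtype.ext (fillRight_setOf_inl_mem hR s.2)
      right_inv := fun _ => rfl }

theorem IsInducedMatching.card_toRight_le_card_toLeft {S : Finset (α ⊕ β)}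
    (hS : IsInducedMatching G S) (hR : ∀ b b', ¬ G.Adj (inr b) (inr b')) :
    #S.toRight ≤ #S.toLeft := by
  refine card_le_card_of_forall_subsingleton (fun b a => G.Adj (inr b) (inl a)) ?_ ?_
  · intro b hb
    obtain ⟨(a | b'), ha, hadj, -⟩ := hS (inr b) (mem_toRight.1 hb)
    · exact ⟨a, mem_toLeft.2 ha, hadj⟩
    · exact absurd hadj (hR b b')
  · intro a ha b hb b' hb'
    exact inr_injective <| hS.eq_of_adj (mem_toLeft.1 ha) (mem_toRight.1 hb.1)
      (mem_toRight.1 hb'.1) hb.2.symm hb'.2.symm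

end Bipartite

theorem Nat.card_set_ne {α : Type*} [Finite α] (A₀ : Set α) :
    Nat.card {A : Set α // A ≠ A₀} = 2 ^ Nat.card α - 1 := by
  have := Fintype.ofFinite α
  classical
  rw [Nat.card_eq_fintype_card, Fintype.card_subtype_compl, Fintype.card_subtype_eq,
    Fintype.card_set, Nat.card_eq_fintype_card]

namespace Bgraph

variable {m : ℕ}

@[simp]
theorem adj_inl_inr {x : Fin m} {y : Fin (2 * m)} :
    (Bgraph m).Adj (inl x) (inr y) ↔
      (x.val < m - 1 ∧ (y.val = x.val ∨ y.val = m - 1 + x.val)) ∨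
        (x.val = m - 1 ∧ m - 1 ≤ y.val ∧ y.val ≤ 2 * m - 3) := by
  simp [Bgraph]

theorem not_adj_inl_inl (x x' : Fin m) : ¬ (Bgraph m).Adj (inl x) (inl x') := by
  simp [Bgraph]

theorem not_adj_inr_inr (y y' : Fin (2 * m)) : ¬ (Bgraph m).Adj (inr y) (inr y') := by
  simp [Bgraph]

theorem isFillable_iff (hm : 2 ≤ m) (A : Set (Fin m)) :
    IsFillable (Bgraph m) A ↔ A ≠ {x | x.val < m - 1} := by
  refine ⟨?_, fun hA x hx => ?_⟩
  · rintro h rfl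
    obtain ⟨y, hadj, hy⟩ := h ⟨m - 1, by omega⟩ (by simp)
    obtain ⟨hlast, -⟩ | ⟨-, hlo, hhi⟩ := adj_inl_inr.1 hadj
    · exact absurd hlast (lt_irrefl _)
    exact hy ⟨y.val - (m - 1), by omega⟩ (by simp; omega) (by simp; omega)
  by_cases hxlt : x.val < m - 1
  · refine ⟨⟨x.val, by omega⟩, by simp [hxlt], fun a ha hadj => hx ?_⟩
    obtain rfl : a = x := Fin.ext (by simp at hadj; omega)
    exact ha
  · have hAlt : A ⊆ {x | x.val < m - 1} := fun a ha => by
      have : a ≠ x := by rintro rfl; exact hx ha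
      have := Fin.val_ne_of_ne this
      simp; omega
    obtain ⟨i, hi : i.val < m - 1, hiA⟩ := Set.exists_of_ssubset (hAlt.ssubset_of_ne hA)
    refine ⟨⟨m - 1 + i.val, by omega⟩, by simp; omega, fun a ha hadj => hiA ?_⟩
    have : a.val < m - 1 := hAlt ha
    obtain rfl : a = i := Fin.ext (by simp at hadj; omega)
    exact ha

theorem exists_inl_notMem (hm : 2 ≤ m) {S : Finset (Fin m ⊕ Fin (2 * m))}
    (hS : IsInducedMatching (Bgraph m) S) : ∃ x, inl x ∉ S := by
  by_contra! hall
  obtain ⟨(x | y), hy, hadj, -⟩ := hS (inl ⟨m - 1, by omega⟩) (hall _)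
  · exact absurd hadj (not_adj_inl_inl _ _)
  obtain ⟨hlast, -⟩ | ⟨-, hlo, hhi⟩ := adj_inl_inr.1 hadj
  · exact absurd hlast (lt_irrefl _)
  have := hS.eq_of_adj hy (hall ⟨m - 1, by omega⟩) (hall ⟨y.val - (m - 1), by omega⟩)
    hadj.symm (adj_inl_inr.2 (by simp; omega)).symm
  simp only [inl.injEq, Fin.mk.injEq] at this
  omega

theorem exists_isInducedMatching_card (hm : 0 < m) :
    ∃ S : Finset (Fin m ⊕ Fin (2 * m)), #S = 2 * (m - 1) ∧ IsInducedMatching (Bgraph m) S := by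
  refine ⟨(Iio (⟨m - 1, by omega⟩ : Fin m)).disjSum (Iio ⟨m - 1, by omega⟩), ?_, ?_⟩
  · simp only [card_disjSum, Fin.card_Iio]; omega
  rintro (x | y) hv <;> simp only [inl_mem_disjSum, inr_mem_disjSum, mem_Iio, Fin.lt_def] at hv
  · refine ⟨inr ⟨x.val, by omega⟩, by simpa [Fin.lt_def], by simp [hv], ?_⟩
    rintro (x' | y) hz hadj
    · exact absurd hadj (not_adj_inl_inl _ _)
    simp only [inr_mem_disjSum, mem_Iio, Fin.lt_def] at hz
    simp only [adj_inl_inr] at hadj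
    simp only [inr.injEq, Fin.ext_iff]; omega
  · refine ⟨inl ⟨y.val, by omega⟩, by simpa [Fin.lt_def],
      (adj_inl_inr.2 (by simp [hv])).symm, ?_⟩
    rintro (x | y') hz hadj
    · simp only [inl_mem_disjSum, mem_Iio, Fin.lt_def] at hz
      simp only [SimpleGraph.adj_comm _ (inr _), adj_inl_inr] at hadj
      simp only [inl.injEq, Fin.ext_iff]; omega
    · exact absurd hadj (not_adj_inr_inr _ _)

end Bgraph

theorem im_mis_Bgraph (m : ℕ) (hm : 2 ≤ m) :
    im (Bgraph m) = m - 1 ∧ mis (Bgraph m) = 2 ^ m - 1 := by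
  refine ⟨im_eq_of_isGreatest (Bgraph.exists_isInducedMatching_card (by omega))
    fun k S hk hS => ?_, ?_⟩
  · obtain ⟨x, hx⟩ := Bgraph.exists_inl_notMem hm hS
    have hleft : #S.toLeft < m := by
      simpa using card_lt_univ_of_notMem (mem_toLeft.not.2 hx)
    have hright := hS.card_toRight_le_card_toLeft Bgraph.not_adj_inr_inr
    have hsplit := card_toLeft_add_card_toRight (u := S)
    omega
  · rw [mis_eq_card_isFillable Bgraph.not_adj_inl_inl Bgraph.not_adj_inr_inr]
    simp only [Bgraph.isFillable_iff hm]
    rw [Nat.card_set_ne, Nat.card_eq_fintype_card, Fintype.card_fin]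
end

section
/- For m ≥ 2 and k ≥ 1, let G be the vertex-disjoint union of k copies of the graph B_m, where B_m is the bipartite graph with parts X = {1,…,m} and Y = {1,…,2m} in which, for x ≤ m−1, x is adjacent to y iff y = x or y = m−1+x, and the vertex x = m is adjacent to y iff m ≤ y ≤ 2m−2. Then G is bipartite with parts of sizes km and 2km, im(G) = k(m − 1), and mis(G) = (2^m − 1)^k. (In particular, with m = 1/ε and k = εn this shows the 2^{−O(1/ε)} dependence of δ on ε in the unbalanced bipartite stability theorem is best possible up to the implied constant.) -/
/-- The vertex-disjoint union of `k` copies of `Bgraph m`. -/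
def kBgraph (k m : ℕ) : SimpleGraph (Fin k × (Fin m ⊕ Fin (2 * m))) where
  Adj a b := a.1 = b.1 ∧ (Bgraph m).Adj a.2 b.2
  symm := ⟨fun a b h => ⟨h.1.symm, h.2.symm⟩⟩
  loopless := ⟨fun a h => (Bgraph m).irrefl h.2⟩

/-! Each copy of `B_m` is bipartite, so a maximal independent set is `A ∪ (Y \ N(A))` for its
trace `A` on `X`, and this set is maximal iff every `x ∉ A` has a neighbour outside `N(A)`. For
`x < m - 1` the vertex `y = x` is a private neighbour, and `x = m - 1` fails exactly when
`A = X \ {m - 1}`, since then `N(A)` already covers `N(m - 1)`; this leaves `2^m - 1` choices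
of `A` per copy. An induced matching meets `Y` in at most as many vertices as `X`, and it
cannot contain all of `X`: the partner `y` of `m - 1` has the second neighbour `y - (m - 1)`.
So each copy carries at most `m - 1` edges, attained by the edges `x y` with `x = y < m - 1`. -/

open Finset

theorem isMaxIndepSet_iff_forall_exists_adj {V : Type*} {G : SimpleGraph V} {s : Set V} :
    IsMaxIndepSet G s ↔ IsIndepSet G s ∧ ∀ v ∉ s, ∃ u ∈ s, G.Adj u v := by
  refine ⟨fun ⟨hs, hmax⟩ => ⟨hs, fun v hv => ?_⟩, fun ⟨hs, hdom⟩ => ⟨hs, fun t ht hst => ?_⟩⟩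
  · by_contra! h
    have hins : IsIndepSet G (insert v s) := by
      rintro x (rfl | hx) y (rfl | hy) hxy
      · exact G.irrefl hxy
      · exact h y hy hxy.symm
      · exact h x hx hxy
      · exact hs hx hy hxy
    exact hv (hmax _ hins (Set.subset_insert v s) ▸ Set.mem_insert v s)
  · refine hst.antisymm fun v hvt => ?_
    by_contra hvs
    obtain ⟨u, hu, huv⟩ := hdom v hvs
    exact ht (hst hu) hvt huv

theorem im_eq_of_isInducedMatching {V : Type*} {G : SimpleGraph V} {S : Finset V} {n : ℕ}
    (hS : IsInducedMatching G S) (hcard : #S = 2 * n)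
    (hmax : ∀ T, IsInducedMatching G T → #T ≤ 2 * n) : im G = n := by
  have hub : ∀ t ∈ {t | ∃ T, #T = 2 * t ∧ IsInducedMatching G T}, t ≤ n := by
    rintro t ⟨T, hTcard, hT⟩
    have := hmax T hT
    omega
  exact le_antisymm (csSup_le ⟨n, S, hcard, hS⟩ hub) (le_csSup ⟨n, hub⟩ ⟨S, hcard, hS⟩)

section Bipartite

variable {α β : Type*} {H : SimpleGraph (α ⊕ β)}

def rightNonNeighbours (H : SimpleGraph (α ⊕ β)) (A : Set α) : Set β :=
  {b | ∀ a ∈ A, ¬ H.Adj (.inl a) (.inr b)}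

/-- The independent set `A ∪ (Y \ N(A))` of a bipartite graph with parts `X = α`, `Y = β`. -/
def withNonNeighbours (H : SimpleGraph (α ⊕ β)) (A : Set α) : Set (α ⊕ β) :=
  {v | Sum.elim (· ∈ A) (· ∈ rightNonNeighbours H A) v}

theorem not_adj_inl_inl_of_le_completeBipartiteGraph (hH : H ≤ completeBipartiteGraph α β)
    (a a' : α) : ¬ H.Adj (.inl a) (.inl a') :=
  fun h => by simpa using hH h

theorem not_adj_inr_inr_of_le_completeBipartiteGraph (hH : H ≤ completeBipartiteGraph α β)
    (b b' : β) : ¬ H.Adj (.inr b) (.inr b') :=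
  fun h => by simpa using hH h

theorem isIndepSet_withNonNeighbours (hH : H ≤ completeBipartiteGraph α β) (A : Set α) :
    IsIndepSet H (withNonNeighbours H A) := by
  rintro (a | b) hv (a' | b') hw hadj
  · exact not_adj_inl_inl_of_le_completeBipartiteGraph hH a a' hadj
  · exact hw a hv hadj
  · exact hv a' hw hadj.symm
  · exact not_adj_inr_inr_of_le_completeBipartiteGraph hH b b' hadj

theorem isMaxIndepSet_withNonNeighbours_iff (hH : H ≤ completeBipartiteGraph α β) (A : Set α) :
    IsMaxIndepSet H (withNonNeighbours H A) ↔
      ∀ a ∉ A, ∃ b ∈ rightNonNeighbours H A, H.Adj (.inl a) (.inr b) := by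
  rw [isMaxIndepSet_iff_forall_exists_adj]
  simp only [isIndepSet_withNonNeighbours hH, true_and]
  constructor
  · intro h a ha
    obtain ⟨a' | b, hu, hadj⟩ := h (.inl a) ha
    · exact absurd hadj (not_adj_inl_inl_of_le_completeBipartiteGraph hH a' a)
    · exact ⟨b, hu, hadj.symm⟩
  · rintro h (a | b) hv
    · obtain ⟨b, hb, hadj⟩ := h a hv
      exact ⟨.inr b, hb, hadj.symm⟩
    · obtain ⟨a, ha, hadj⟩ : ∃ a ∈ A, H.Adj (.inl a) (.inr b) := by
        simpa [withNonNeighbours, rightNonNeighbours] using hv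
      exact ⟨.inl a, ha, hadj⟩

theorem IsMaxIndepSet.eq_withNonNeighbours (hH : H ≤ completeBipartiteGraph α β)
    {s : Set (α ⊕ β)} (hs : IsMaxIndepSet H s) :
    s = withNonNeighbours H (Sum.inl ⁻¹' s) := by
  rw [isMaxIndepSet_iff_forall_exists_adj] at hs
  ext (a | b)
  · rfl
  · refine ⟨fun hb a ha hadj => hs.1 ha hb hadj, fun hb => ?_⟩
    by_contra hbs
    obtain ⟨a | b', hu, hadj⟩ := hs.2 _ hbs
    · exact hb a hu hadj
    · exact not_adj_inr_inr_of_le_completeBipartiteGraph hH b' b hadj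

def maxIndepSetEquiv (hH : H ≤ completeBipartiteGraph α β) :
    {s // IsMaxIndepSet H s} ≃
      {A : Set α // ∀ a ∉ A, ∃ b ∈ rightNonNeighbours H A, H.Adj (.inl a) (.inr b)} where
  toFun s := ⟨Sum.inl ⁻¹' s.1, (isMaxIndepSet_withNonNeighbours_iff hH _).1 <| by
    obtain ⟨s, hs⟩ := s
    rwa [hs.eq_withNonNeighbours hH] at hs⟩
  invFun A := ⟨withNonNeighbours H A, (isMaxIndepSet_withNonNeighbours_iff hH _).2 A.2⟩
  left_inv s := Subtype.ext (s.2.eq_withNonNeighbours hH).symm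
  right_inv _ := rfl

theorem IsInducedMatching.card_toRight_le (hH : H ≤ completeBipartiteGraph α β)
    {T : Finset (α ⊕ β)} (hT : IsInducedMatching H T) :
    #T.toRight ≤ #T.toLeft := by
  refine card_le_card_of_forall_subsingleton (fun b a => H.Adj (.inr b) (.inl a))
    (fun b hb => ?_) (fun a ha => ?_)
  · obtain ⟨a | b', hu, hadj, -⟩ := hT _ (mem_toRight.1 hb)
    · exact ⟨a, mem_toLeft.2 hu, hadj⟩
    · exact absurd hadj (not_adj_inr_inr_of_le_completeBipartiteGraph hH _ _)
  · obtain ⟨u, -, -, huniq⟩ := hT _ (mem_toLeft.1 ha)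
    rintro b₁ ⟨hb₁, h₁⟩ b₂ ⟨hb₂, h₂⟩
    exact Sum.inr_injective <|
      (huniq _ (mem_toRight.1 hb₁) h₁.symm).trans (huniq _ (mem_toRight.1 hb₂) h₂.symm).symm

theorem IsInducedMatching.card_le_two_mul_card_toLeft (hH : H ≤ completeBipartiteGraph α β)
    {T : Finset (α ⊕ β)} (hT : IsInducedMatching H T) : #T ≤ 2 * #T.toLeft := by
  have := hT.card_toRight_le hH
  rw [← card_toLeft_add_card_toRight]
  omega

end Bipartite

section DisjointCopies

variable {ι W : Type*} {H : SimpleGraph W}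

theorem bot_boxProd_adj {x y : ι × W} :
    ((⊥ : SimpleGraph ι) □ H).Adj x y ↔ x.1 = y.1 ∧ H.Adj x.2 y.2 := by
  simp [SimpleGraph.boxProd_adj, and_comm]

theorem isMaxIndepSet_bot_boxProd_iff {s : Set (ι × W)} :
    IsMaxIndepSet ((⊥ : SimpleGraph ι) □ H) s ↔ ∀ i, IsMaxIndepSet H (Prod.mk i ⁻¹' s) := by
  simp only [isMaxIndepSet_iff_forall_exists_adj]
  constructor
  · rintro ⟨hs, hdom⟩ i
    refine ⟨fun w hw w' hw' hadj => hs hw hw' (bot_boxProd_adj.2 ⟨rfl, hadj⟩), fun w hw => ?_⟩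
    obtain ⟨⟨j, u⟩, hu, hadj⟩ := hdom (i, w) hw
    obtain ⟨rfl, hadj⟩ := bot_boxProd_adj.1 hadj
    exact ⟨u, hu, hadj⟩
  · intro h
    refine ⟨?_, ?_⟩
    · rintro ⟨i, w⟩ hw ⟨j, w'⟩ hw' hadj
      obtain ⟨rfl, hadj⟩ := bot_boxProd_adj.1 hadj
      exact (h i).1 hw hw' hadj
    · rintro ⟨i, w⟩ hw
      obtain ⟨u, hu, hadj⟩ := (h i).2 w hw
      exact ⟨(i, u), hu, bot_boxProd_adj.2 ⟨rfl, hadj⟩⟩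

def maxIndepSetBotBoxProdEquiv :
    {s // IsMaxIndepSet ((⊥ : SimpleGraph ι) □ H) s} ≃ (ι → {t // IsMaxIndepSet H t}) where
  toFun s i := ⟨Prod.mk i ⁻¹' s.1, isMaxIndepSet_bot_boxProd_iff.1 s.2 i⟩
  invFun f := ⟨{v | v.2 ∈ (f v.1).1}, isMaxIndepSet_bot_boxProd_iff.2 fun i => (f i).2⟩
  left_inv _ := rfl
  right_inv _ := rfl

theorem mis_bot_boxProd [Finite ι] : mis ((⊥ : SimpleGraph ι) □ H) = mis H ^ Nat.card ι := by
  rw [mis, Nat.card_congr maxIndepSetBotBoxProdEquiv, Nat.card_fun, mis]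

theorem IsInducedMatching.preimage_mk {S : Finset (ι × W)}
    (hS : IsInducedMatching ((⊥ : SimpleGraph ι) □ H) S) (i : ι) :
    IsInducedMatching H (S.preimage (Prod.mk i) (Prod.mk_right_injective i).injOn) := by
  intro w hw
  obtain ⟨⟨j, u⟩, hu, hadj, huniq⟩ := hS _ (mem_preimage.1 hw)
  obtain ⟨rfl, hadj⟩ := bot_boxProd_adj.1 hadj
  exact ⟨u, mem_preimage.2 hu, hadj, fun z hz hzadj =>
    congrArg Prod.snd (huniq _ (mem_preimage.1 hz) (bot_boxProd_adj.2 ⟨rfl, hzadj⟩))⟩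

theorem IsInducedMatching.card_le_of_bot_boxProd [Fintype ι] {c : ℕ}
    (hc : ∀ T, IsInducedMatching H T → #T ≤ c) {S : Finset (ι × W)}
    (hS : IsInducedMatching ((⊥ : SimpleGraph ι) □ H) S) : #S ≤ Fintype.card ι * c := by
  classical
  let fiber i := S.preimage (Prod.mk i) (Prod.mk_right_injective i).injOn
  calc #S ≤ #(univ.biUnion fun i => (fiber i).map (Function.Embedding.sectR i W)) :=
        card_le_card fun v hv => mem_biUnion.2
          ⟨v.1, mem_univ _, mem_map.2 ⟨v.2, mem_preimage.2 hv, rfl⟩⟩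
    _ ≤ ∑ i, #(fiber i) := card_biUnion_le.trans_eq (by simp only [card_map])
    _ ≤ ∑ _i : ι, c := sum_le_sum fun i _ => hc _ (hS.preimage_mk i)
    _ = Fintype.card ι * c := by simp

theorem IsInducedMatching.univ_product [Fintype ι] {T : Finset W} (hT : IsInducedMatching H T) :
    IsInducedMatching ((⊥ : SimpleGraph ι) □ H) (univ ×ˢ T) := by
  rintro ⟨i, w⟩ hv
  obtain ⟨u, hu, hadj, huniq⟩ := hT w (mem_product.1 hv).2
  refine ⟨(i, u), mem_product.2 ⟨mem_univ _, hu⟩, bot_boxProd_adj.2 ⟨rfl, hadj⟩,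
    fun ⟨j, z⟩ hz hzadj => ?_⟩
  obtain ⟨rfl, hzadj⟩ := bot_boxProd_adj.1 hzadj
  rw [huniq z (mem_product.1 hz).2 hzadj]

end DisjointCopies

theorem card_filter_snd_isLeft {ι α β : Type*} [Fintype ι] [Fintype α] [Fintype β] :
    #{v : ι × (α ⊕ β) | v.2.isLeft} = Fintype.card ι * Fintype.card α := by
  rw [← univ_product_univ, filter_product_right (q := fun w : α ⊕ β => w.isLeft), card_product,
    card_univ, ← Fintype.card_subtype, Fintype.card_congr (Equiv.sumIsLeft)]

theorem card_filter_snd_isRight {ι α β : Type*} [Fintype ι] [Fintype α] [Fintype β] :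
    #{v : ι × (α ⊕ β) | v.2.isRight} = Fintype.card ι * Fintype.card β := by
  rw [← univ_product_univ, filter_product_right (q := fun w : α ⊕ β => w.isRight), card_product,
    card_univ, ← Fintype.card_subtype, Fintype.card_congr (Equiv.sumIsRight)]

section Bgraph

variable {m : ℕ}

@[simp]
theorem bgraph_adj_inl_inr {x : Fin m} {y : Fin (2 * m)} :
    (Bgraph m).Adj (.inl x) (.inr y) ↔
      (x.val < m - 1 ∧ (y.val = x.val ∨ y.val = m - 1 + x.val)) ∨
        (x.val = m - 1 ∧ m - 1 ≤ y.val ∧ y.val ≤ 2 * m - 3) := by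
  simp [Bgraph]

@[simp]
theorem bgraph_adj_inr_inl {x : Fin m} {y : Fin (2 * m)} :
    (Bgraph m).Adj (.inr y) (.inl x) ↔
      (x.val < m - 1 ∧ (y.val = x.val ∨ y.val = m - 1 + x.val)) ∨
        (x.val = m - 1 ∧ m - 1 ≤ y.val ∧ y.val ≤ 2 * m - 3) := by
  rw [SimpleGraph.adj_comm, bgraph_adj_inl_inr]

theorem bgraph_le_completeBipartiteGraph :
    Bgraph m ≤ completeBipartiteGraph (Fin m) (Fin (2 * m)) := by
  rintro (x | y) (x' | y') h <;> simp_all [Bgraph]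

/-- The paper's vertex `x = m`; indices here start at `0`. -/
def lastLeft (hm : 2 ≤ m) : Fin m := ⟨m - 1, by omega⟩

theorem bgraph_exists_nonNeighbour_iff (hm : 2 ≤ m) {A : Set (Fin m)} :
    (∀ a ∉ A, ∃ b ∈ rightNonNeighbours (Bgraph m) A, (Bgraph m).Adj (.inl a) (.inr b)) ↔
      A ≠ {lastLeft hm}ᶜ := by
  constructor
  · rintro h rfl
    obtain ⟨b, hb, hadj⟩ := h (lastLeft hm) (by simp)
    simp only [bgraph_adj_inl_inr, lastLeft] at hadj
    refine hb ⟨b - (m - 1), by omega⟩ ?_ (by simp; omega)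
    simp [lastLeft, Fin.ext_iff]
    omega
  · intro hA a ha
    by_cases hlt : a.val < m - 1
    · refine ⟨⟨a, by omega⟩, fun a' ha' hadj => ha ?_, by simp [hlt]⟩
      simp only [bgraph_adj_inl_inr] at hadj
      rwa [show a' = a from Fin.ext (by omega)] at ha'
    obtain ⟨i, hiA, hi⟩ : ∃ i ∉ A, i.val < m - 1 := by
      by_contra! h
      refine hA (Set.ext fun j => ⟨fun hj hjl => ha ?_, fun hjl => ?_⟩)
      · rw [show j = lastLeft hm from hjl] at hj
        rwa [show a = lastLeft hm from Fin.ext (by simp [lastLeft]; omega)]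
      · by_contra hjA
        exact hjl (Fin.ext (by have := h j hjA; simp [lastLeft]; omega))
    refine ⟨⟨m - 1 + i, by omega⟩, fun a' ha' hadj => ?_, by simp; omega⟩
    simp only [bgraph_adj_inl_inr] at hadj
    rcases hadj with ⟨h', h | h⟩ | ⟨h, -⟩
    · omega
    · exact hiA (by rwa [show a' = i from Fin.ext (by omega)] at ha')
    · exact ha (by rwa [show a' = a from Fin.ext (by omega)] at ha')

theorem mis_bgraph (hm : 2 ≤ m) : mis (Bgraph m) = 2 ^ m - 1 := by
  classical
  rw [mis, Nat.card_congr ((maxIndepSetEquiv bgraph_le_completeBipartiteGraph).trans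
      (Equiv.subtypeEquivRight fun A => bgraph_exists_nonNeighbour_iff hm)),
    Nat.card_eq_fintype_card, Fintype.card_subtype_compl, Fintype.card_subtype_eq,
    Fintype.card_set, Fintype.card_fin]

theorem IsInducedMatching.exists_inl_notMem_of_bgraph (hm : 2 ≤ m)
    {T : Finset (Fin m ⊕ Fin (2 * m))}
    (hT : IsInducedMatching (Bgraph m) T) : ∃ x, Sum.inl x ∉ T := by
  by_contra! hall
  obtain ⟨x | y, hy, hadj, -⟩ := hT _ (hall (lastLeft hm))
  · exact not_adj_inl_inl_of_le_completeBipartiteGraph bgraph_le_completeBipartiteGraph _ _ hadj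
  · simp only [bgraph_adj_inl_inr, lastLeft] at hadj
    obtain ⟨u, -, -, huniq⟩ := hT _ hy
    have h₁ := huniq (.inl ⟨y - (m - 1), by omega⟩) (hall _) (by simp; omega)
    have h₂ := huniq (.inl (lastLeft hm)) (hall _) (by simp [lastLeft]; omega)
    have := h₁.trans h₂.symm
    simp [lastLeft, Fin.ext_iff] at this
    omega

theorem IsInducedMatching.card_le_of_bgraph (hm : 2 ≤ m) {T : Finset (Fin m ⊕ Fin (2 * m))}
    (hT : IsInducedMatching (Bgraph m) T) : #T ≤ 2 * (m - 1) := by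
  obtain ⟨x, hx⟩ := hT.exists_inl_notMem_of_bgraph hm
  have hleft : #T.toLeft ≤ m - 1 := by
    have := card_le_card (s := T.toLeft) (t := univ.erase x) fun a ha =>
      mem_erase.2 ⟨by rintro rfl; exact hx (mem_toLeft.1 ha), mem_univ _⟩
    simpa using this
  have := hT.card_le_two_mul_card_toLeft bgraph_le_completeBipartiteGraph
  omega

/-- The paper's edges `x y` with `x = y ≤ m - 1`. -/
def bgraphMatching (m : ℕ) : Finset (Fin m ⊕ Fin (2 * m)) :=
  ({x : Fin m | x < m - 1} : Finset _).disjSum {y : Fin (2 * m) | y < m - 1}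

theorem card_bgraphMatching : #(bgraphMatching m) = 2 * (m - 1) := by
  simp [bgraphMatching, card_disjSum, Fin.card_filter_val_lt]
  omega

theorem isInducedMatching_bgraphMatching : IsInducedMatching (Bgraph m) (bgraphMatching m) := by
  have hbip := bgraph_le_completeBipartiteGraph (m := m)
  rintro (x | y) hv <;> simp only [bgraphMatching, inl_mem_disjSum, inr_mem_disjSum, mem_filter,
    mem_univ, true_and] at hv
  · refine ⟨.inr ⟨x, by omega⟩, by simp [bgraphMatching, hv], by simp [hv], ?_⟩
    rintro (x' | y') hz hadj
    · exact absurd hadj (not_adj_inl_inl_of_le_completeBipartiteGraph hbip _ _)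
    · simp only [bgraphMatching, inr_mem_disjSum, mem_filter, mem_univ, true_and] at hz
      simp only [bgraph_adj_inl_inr] at hadj
      simp only [Sum.inr.injEq, Fin.ext_iff]
      omega
  · refine ⟨.inl ⟨y, by omega⟩, by simp [bgraphMatching, hv], by simp [hv], ?_⟩
    rintro (x' | y') hz hadj
    · simp only [bgraphMatching, inl_mem_disjSum, mem_filter, mem_univ, true_and] at hz
      simp only [bgraph_adj_inr_inl] at hadj
      simp only [Sum.inl.injEq, Fin.ext_iff]
      omega
    · exact absurd hadj (not_adj_inr_inr_of_le_completeBipartiteGraph hbip _ _)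

end Bgraph

theorem kBgraph_eq_bot_boxProd (k m : ℕ) :
    kBgraph k m = (⊥ : SimpleGraph (Fin k)) □ Bgraph m := by
  ext
  rw [bot_boxProd_adj]
  rfl

theorem im_mis_kBgraph_general (k m : ℕ) (hm : 2 ≤ m) :
    (Finset.univ.filter (fun v : Fin k × (Fin m ⊕ Fin (2 * m)) => v.2.isLeft = true)).card
        = k * m ∧
    (Finset.univ.filter (fun v : Fin k × (Fin m ⊕ Fin (2 * m)) => v.2.isRight = true)).card
        = 2 * (k * m) ∧
    (∀ a b : Fin k × (Fin m ⊕ Fin (2 * m)), (kBgraph k m).Adj a b →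
      (a.2.isLeft = true ∧ b.2.isRight = true) ∨ (a.2.isRight = true ∧ b.2.isLeft = true)) ∧
    im (kBgraph k m) = k * (m - 1) ∧
    mis (kBgraph k m) = (2 ^ m - 1) ^ k := by
  rw [kBgraph_eq_bot_boxProd]
  refine ⟨by simp [card_filter_snd_isLeft], by simp [card_filter_snd_isRight]; ring,
    fun a b hab => bgraph_le_completeBipartiteGraph (bot_boxProd_adj.1 hab).2, ?_, ?_⟩
  · refine im_eq_of_isInducedMatching isInducedMatching_bgraphMatching.univ_product
      (by simp [card_bgraphMatching]; ring) fun T hT => ?_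
    have := hT.card_le_of_bot_boxProd fun T' hT' => hT'.card_le_of_bgraph hm
    simp only [Fintype.card_fin] at this
    linarith
  · rw [mis_bot_boxProd, mis_bgraph hm, Nat.card_fin]

theorem im_mis_kBgraph (k m : ℕ) (hm : 2 ≤ m) (hk : 1 ≤ k) :
    (Finset.univ.filter (fun v : Fin k × (Fin m ⊕ Fin (2 * m)) => v.2.isLeft = true)).card
        = k * m ∧
    (Finset.univ.filter (fun v : Fin k × (Fin m ⊕ Fin (2 * m)) => v.2.isRight = true)).card
        = 2 * (k * m) ∧
    (∀ a b : Fin k × (Fin m ⊕ Fin (2 * m)), (kBgraph k m).Adj a b →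
      (a.2.isLeft = true ∧ b.2.isRight = true) ∨ (a.2.isRight = true ∧ b.2.isLeft = true)) ∧
    im (kBgraph k m) = k * (m - 1) ∧
    mis (kBgraph k m) = (2 ^ m - 1) ^ k :=
  im_mis_kBgraph_general k m hm
end

section
/- (Shearer's Lemma, fractional cover version) Let ψ = (ψ₁,…,ψ_m) be a random vector of discrete random variables, and let α : 2^{[m]} → ℝ_{≥0} satisfy ∑_{A ∋ i} α_A = 1 for every i ∈ [m]. Then H(ψ) ≤ ∑_{A ⊆ [m]} α_A · H(ψ_A), where ψ_A = (ψ_i : i ∈ A) and H denotes Shannon entropy (base 2). -/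
/-!
Entropy is submodular, `H(X,Y,Z) + H(Y) ≤ H(X,Y) + H(Y,Z)`: this is Gibbs' inequality comparing
the law of `(X,Y,Z)` with the law under which `X` and `Z` are conditionally independent given `Y`.
Hence `A ↦ H(ψ_A)` has diminishing returns: adding a coordinate `i` to `A ⊆ B` raises the entropy
of `ψ_A` at least as much as that of `ψ_B`. Build `[m]` up one coordinate at a time; when `i` is
added to `S`, the increment of `H(ψ_S)` is at most the increment of `H(ψ_{A ∩ S})` for every
`A ∋ i`, and averaging these with the weights `α_A`, which sum to `1` over `A ∋ i`, gives the claim.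
-/

/-- The (base-2) Shannon entropy of a discrete random variable `f` on a finite
probability space with mass function `p`. -/
noncomputable def entropy {Ω : Type*} [Fintype Ω] (p : Ω → ℝ)
    {γ : Type*} [Fintype γ] [DecidableEq γ] (f : Ω → γ) : ℝ :=
  - ∑ y : γ,
      (∑ ω ∈ Finset.univ.filter (fun ω => f ω = y), p ω) *
        Real.logb 2 (∑ ω ∈ Finset.univ.filter (fun ω => f ω = y), p ω)

open Finset Real

section Entropy

variable {Ω : Type*} [Fintype Ω] (p : Ω → ℝ)
  {α β γ : Type*} [DecidableEq α] [DecidableEq β] [DecidableEq γ]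

noncomputable def fiberMass (f : Ω → γ) (y : γ) : ℝ :=
  ∑ ω ∈ univ.filter (fun ω => f ω = y), p ω

noncomputable def atomMass (f : Ω → γ) (ω : Ω) : ℝ :=
  fiberMass p f (f ω)

theorem sum_fiberMass_mul [Fintype γ] (f : Ω → γ) (F : γ → ℝ) :
    ∑ y, fiberMass p f y * F y = ∑ ω, p ω * F (f ω) := by
  rw [← sum_fiberwise univ f]
  refine sum_congr rfl fun y _ => ?_
  rw [fiberMass, sum_mul]
  exact sum_congr rfl fun ω hω => by rw [(mem_filter.1 hω).2]

theorem fiberMass_nonneg {p : Ω → ℝ} (hp0 : ∀ ω, 0 ≤ p ω) (f : Ω → γ) (y : γ) :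
    0 ≤ fiberMass p f y :=
  sum_nonneg fun ω _ => hp0 ω

theorem atomMass_pos {p : Ω → ℝ} (hp0 : ∀ ω, 0 ≤ p ω) (f : Ω → γ) {ω : Ω} (hω : 0 < p ω) :
    0 < atomMass p f ω :=
  hω.trans_le <| single_le_sum (fun ω' _ => hp0 ω') (by simp)

theorem entropy_eq_neg_sum_mul_log_atomMass [Fintype γ] (f : Ω → γ) :
    entropy p f = -(∑ ω, p ω * log (atomMass p f ω)) / log 2 := by
  unfold atomMass
  rw [← sum_fiberMass_mul p f (fun y => log (fiberMass p f y)), neg_div, sum_div]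
  simp only [mul_div_assoc]
  rfl

theorem entropy_congr [Fintype β] [Fintype γ] {f : Ω → β} {g : Ω → γ}
    (h : ∀ ω ω', f ω = f ω' ↔ g ω = g ω') :
    entropy p f = entropy p g := by
  have : atomMass p f = atomMass p g := funext fun ω => by
    simp only [atomMass, fiberMass, h _ ω]
  rw [entropy_eq_neg_sum_mul_log_atomMass, entropy_eq_neg_sum_mul_log_atomMass, this]

theorem entropy_const [Fintype γ] (hp1 : ∑ ω, p ω = 1) (c : γ) : entropy p (fun _ => c) = 0 := by
  have : atomMass p (fun _ => c) = 1 := funext fun _ => by simp [atomMass, fiberMass, hp1]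
  simp [entropy_eq_neg_sum_mul_log_atomMass, this]

theorem sum_fiberMass_pair_left [Fintype α] (f : Ω → α) (g : Ω → β) (y : β) :
    ∑ x, fiberMass p (fun ω => (f ω, g ω)) (x, y) = fiberMass p g y := by
  simp only [fiberMass, Prod.mk.injEq]
  rw [← sum_fiberwise (univ.filter fun ω => g ω = y) f p]
  simp only [filter_filter, and_comm]

theorem sum_fiberMass_pair_right [Fintype β] (f : Ω → α) (g : Ω → β) (x : α) :
    ∑ y, fiberMass p (fun ω => (f ω, g ω)) (x, y) = fiberMass p f x := by
  simp only [fiberMass, Prod.mk.injEq]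
  rw [← sum_fiberwise (univ.filter fun ω => f ω = x) g p]
  simp only [filter_filter]

theorem sum_fiberMass [Fintype γ] (f : Ω → γ) : ∑ y, fiberMass p f y = ∑ ω, p ω := by
  simpa using sum_fiberMass_mul p f (fun _ => 1)

theorem sum_mul_log_div_atomMass_le [Fintype γ] {p : Ω → ℝ} (hp0 : ∀ ω, 0 ≤ p ω)
    (f : Ω → γ) {q : γ → ℝ} (hq0 : ∀ y, 0 ≤ q y) (hq : ∀ ω, 0 < p ω → 0 < q (f ω)) :
    ∑ ω, p ω * log (q (f ω) / atomMass p f ω) ≤ ∑ y, q y - ∑ ω, p ω := by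
  calc ∑ ω, p ω * log (q (f ω) / atomMass p f ω)
      ≤ ∑ ω, p ω * (q (f ω) / fiberMass p f (f ω) - 1) := by
        refine sum_le_sum fun ω _ => ?_
        rcases (hp0 ω).eq_or_lt with hω | hω
        · simp [← hω]
        · exact mul_le_mul_of_nonneg_left (log_le_sub_one_of_pos
            (div_pos (hq ω hω) (atomMass_pos hp0 f hω))) hω.le
    _ = ∑ y, fiberMass p f y * (q y / fiberMass p f y) - ∑ ω, p ω := by
        simp only [sum_fiberMass_mul, mul_sub, mul_one, sum_sub_distrib]
    _ ≤ ∑ y, q y - ∑ ω, p ω := by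
        gcongr with y
        rcases eq_or_ne (fiberMass p f y) 0 with h | h
        · simp [h, hq0]
        · rw [mul_div_cancel₀ _ h]

theorem entropy_submodular [Fintype α] [Fintype β] [Fintype γ] {p : Ω → ℝ}
    (hp0 : ∀ ω, 0 ≤ p ω) (X : Ω → α) (Y : Ω → β) (Z : Ω → γ) :
    entropy p (fun ω => (X ω, Y ω, Z ω)) + entropy p Y ≤
      entropy p (fun ω => (X ω, Y ω)) + entropy p (fun ω => (Y ω, Z ω)) := by
  set XY := fun ω => (X ω, Y ω)
  set YZ := fun ω => (Y ω, Z ω)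
  set XYZ := fun ω => (X ω, Y ω, Z ω)
  -- the law of `X` and `Z` conditionally independent given `Y`
  set q : α × β × γ → ℝ := fun s =>
    fiberMass p XY (s.1, s.2.1) * (fiberMass p YZ s.2 / fiberMass p Y s.2.1)
  have hq0 : ∀ s, 0 ≤ q s := fun s =>
    mul_nonneg (fiberMass_nonneg hp0 _ _) (div_nonneg (fiberMass_nonneg hp0 _ _)
      (fiberMass_nonneg hp0 _ _))
  have hq : ∀ ω, 0 < p ω → 0 < q (XYZ ω) := fun ω hω =>
    mul_pos (atomMass_pos hp0 XY hω)
      (div_pos (atomMass_pos hp0 YZ hω) (atomMass_pos hp0 Y hω))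
  have hq_sum : ∑ s, q s = ∑ ω, p ω := by
    calc ∑ s, q s = ∑ y, (∑ x, fiberMass p XY (x, y)) *
          ((∑ z, fiberMass p YZ (y, z)) / fiberMass p Y y) := by
          simp only [q, Fintype.sum_prod_type, sum_mul, mul_sum, sum_div]
          rw [sum_comm]
          exact sum_congr rfl fun y _ => sum_comm
      _ = ∑ ω, p ω := by
          simp only [XY, YZ, sum_fiberMass_pair_left, sum_fiberMass_pair_right,
            mul_div_assoc', mul_self_div_self, sum_fiberMass]
  have gibbs := sum_mul_log_div_atomMass_le hp0 XYZ hq0 hq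
  rw [hq_sum, sub_self] at gibbs
  have h_log_split : ∀ ω, p ω * log (q (XYZ ω) / atomMass p XYZ ω) =
      p ω * log (atomMass p XY ω) + p ω * log (atomMass p YZ ω) -
        p ω * log (atomMass p Y ω) - p ω * log (atomMass p XYZ ω) := fun ω => by
    rcases (hp0 ω).eq_or_lt with hω | hω
    · simp [← hω]
    have h_xy := atomMass_pos hp0 XY hω
    have h_yz := atomMass_pos hp0 YZ hω
    have h_y := atomMass_pos hp0 Y hω
    have h_xyz := atomMass_pos hp0 XYZ hω
    change p ω * log (atomMass p XY ω * (atomMass p YZ ω / atomMass p Y ω) /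
      atomMass p XYZ ω) = _
    rw [log_div (mul_pos h_xy (div_pos h_yz h_y)).ne' h_xyz.ne',
      log_mul h_xy.ne' (div_pos h_yz h_y).ne', log_div h_yz.ne' h_y.ne']
    ring
  simp only [h_log_split, sum_sub_distrib, sum_add_distrib] at gibbs
  simp only [entropy_eq_neg_sum_mul_log_atomMass, ← add_div]
  rw [div_le_div_iff_of_pos_right (log_pos one_lt_two)]
  linarith

end Entropy

theorem le_sum_mul_of_diminishing_returns {ι : Type*} [Fintype ι] [DecidableEq ι]
    {E : Finset ι → ℝ} (h_empty : E ∅ = 0)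
    (h_insert : ∀ A B i, A ⊆ B → E (insert i B) + E A ≤ E (insert i A) + E B)
    {α : Finset ι → ℝ} (hα0 : ∀ A, 0 ≤ α A) (hα1 : ∀ i, ∑ A ∈ univ.filter (i ∈ ·), α A = 1) :
    E univ ≤ ∑ A, α A * E A := by
  suffices ∀ S, E S ≤ ∑ A, α A * E (A ∩ S) by simpa using this univ
  intro S
  induction S using Finset.induction_on with
  | empty => simp [h_empty]
  | insert i S hi ih =>
    have h_step : ∀ A, α A * E (A ∩ S) + (if i ∈ A then α A else 0) * (E (insert i S) - E S) ≤
        α A * E (A ∩ insert i S) := fun A => by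
      by_cases hiA : i ∈ A
      · have := h_insert (A ∩ S) S i inter_subset_right
        rw [if_pos hiA, inter_insert_of_mem hiA]
        nlinarith [hα0 A]
      · simp [hiA, inter_insert_of_notMem hiA]
    calc E (insert i S) = E S + (∑ A, if i ∈ A then α A else 0) * (E (insert i S) - E S) := by
          rw [← sum_filter, hα1]; ring
      _ ≤ ∑ A, (α A * E (A ∩ S) + (if i ∈ A then α A else 0) * (E (insert i S) - E S)) := by
          rw [sum_add_distrib, ← sum_mul]; linarith
      _ ≤ ∑ A, α A * E (A ∩ insert i S) := sum_le_sum fun A _ => h_step A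

section JointEntropy

variable {Ω : Type*} [Fintype Ω] (p : Ω → ℝ) {ι : Type*} [DecidableEq ι] {β : ι → Type*}
  [∀ i, Fintype (β i)] [∀ i, DecidableEq (β i)] (ψ : ∀ i, Ω → β i)

noncomputable def jointEntropy (A : Finset ι) : ℝ :=
  entropy p (fun ω (i : A) => ψ i.1 ω)

theorem entropy_eq_jointEntropy {γ : Type*} [Fintype γ] [DecidableEq γ] {g : Ω → γ}
    {S : Finset ι} (h : ∀ ω ω', g ω = g ω' ↔ ∀ j ∈ S, ψ j ω = ψ j ω') :
    entropy p g = jointEntropy p ψ S :=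
  entropy_congr p fun ω ω' => by simpa [funext_iff] using h ω ω'

theorem jointEntropy_empty (hp1 : ∑ ω, p ω = 1) : jointEntropy p ψ ∅ = 0 := by
  rw [← entropy_eq_jointEntropy p ψ (g := fun _ => ()) (by simp), entropy_const p hp1]

theorem jointEntropy_insert_add_le {p : Ω → ℝ} (hp0 : ∀ ω, 0 ≤ p ω) {A B : Finset ι}
    (hAB : A ⊆ B) (i : ι) :
    jointEntropy p ψ (insert i B) + jointEntropy p ψ A ≤
      jointEntropy p ψ (insert i A) + jointEntropy p ψ B := by
  set ψA := fun ω (j : A) => ψ j.1 ω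
  set ψB := fun ω (j : B) => ψ j.1 ω
  have h := entropy_submodular hp0 (ψ i) ψA ψB
  rwa [entropy_eq_jointEntropy p ψ (g := fun ω => (ψ i ω, ψA ω, ψB ω)) (S := insert i B)
      (by
        simp only [ψA, ψB, Prod.mk.injEq, funext_iff, Subtype.forall, mem_insert,
          forall_eq_or_imp, and_congr_right_iff, and_iff_right_iff_imp]
        exact fun _ _ _ h j hj => h j (hAB hj)),
    entropy_eq_jointEntropy p ψ (g := fun ω => (ψ i ω, ψA ω)) (S := insert i A)
      (by simp [ψA, funext_iff]),
    entropy_eq_jointEntropy p ψ (g := fun ω => (ψA ω, ψB ω)) (S := B)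
      (by
        simp only [ψA, ψB, Prod.mk.injEq, funext_iff, Subtype.forall, and_iff_right_iff_imp]
        exact fun _ _ h j hj => h j (hAB hj))] at h

end JointEntropy

/-- Shearer's lemma, fractional cover version. -/
theorem shearer {m : ℕ} (β : Fin m → Type*) [∀ i, Fintype (β i)] [∀ i, DecidableEq (β i)]
    {Ω : Type*} [Fintype Ω] (p : Ω → ℝ) (hp0 : ∀ ω, 0 ≤ p ω) (hp1 : ∑ ω, p ω = 1)
    (ψ : ∀ i : Fin m, Ω → β i) (α : Finset (Fin m) → ℝ) (hα0 : ∀ A, 0 ≤ α A)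
    (hα1 : ∀ i : Fin m, ∑ A ∈ Finset.univ.filter (fun A : Finset (Fin m) => i ∈ A), α A = 1) :
    entropy p (fun ω (i : Fin m) => ψ i ω) ≤
      ∑ A : Finset (Fin m), α A * entropy p (fun ω (i : A) => ψ i.1 ω) := by
  rw [entropy_eq_jointEntropy p ψ (S := univ) (by simp [funext_iff])]
  exact le_sum_mul_of_diminishing_returns (jointEntropy_empty p ψ hp1)
    (fun _ _ i hAB => jointEntropy_insert_add_le ψ hp0 hAB i) hα0 hα1
end
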